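/- arXiv:2604.05941 — 6 statements merged into one kernel-verified Lean document; each statement's English description precedes it below -/
import Mathlib

section
/- Let x : [0,1] → ℝ be continuous and 1 ≤ p < q. If the p-th variation of x along the dyadic partition sequence exists as a uniform limit (so x ∈ V^p_𝕋), then the q-th variation of x along the dyadic partition sequence is identically zero, i.e. lim_{n→∞} Σ_{j=0}^{2^n−1} |x((j+1)2^{−n} ∧ t) − x(j2^{−n} ∧ t)|^q = 0 for every t ∈ [0,1]. -/
/-- Discrete p-th variation of `x` along the n-th dyadic partition, stopped at `t`. -/
noncomputable def dyadicPVar (p : ℝ) (x : ℝ → ℝ) (n : ℕ) (t : ℝ) : ℝ :=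
  ∑ j ∈ Finset.range (2 ^ n),
    |x (min (((j : ℝ) + 1) / 2 ^ n) t) - x (min ((j : ℝ) / 2 ^ n) t)| ^ p

lemma min_lip_aux (a b t : ℝ) : |min a t - min b t| ≤ |a - b| := by
  rcases le_total a t with h1 | h1 <;> rcases le_total b t with h2 | h2
  · rw [min_eq_left h1, min_eq_left h2]
  · rw [min_eq_left h1, min_eq_right h2,
      abs_of_nonpos (by linarith), abs_of_nonpos (by linarith)]; linarith
  · rw [min_eq_right h1, min_eq_left h2,
      abs_of_nonneg (by linarith), abs_of_nonneg (by linarith)]; linarith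
  · rw [min_eq_right h1, min_eq_right h2]; simp [abs_nonneg]

/-- if `x ∈ V^p_𝕋` (its dyadic p-th variation converges pointwise to a
continuous limit), then for any `q > p ≥ 1` the dyadic q-th variation vanishes. -/
theorem stmt0 (p q : ℝ) (hp : 1 ≤ p) (hpq : p < q)
    (x : ℝ → ℝ) (hx : ContinuousOn x (Set.Icc 0 1))
    (V : ℝ → ℝ) (hV : ContinuousOn V (Set.Icc 0 1))
    (hlim : ∀ t ∈ Set.Icc (0 : ℝ) 1,
      Filter.Tendsto (fun n => dyadicPVar p x n t) Filter.atTop (nhds (V t))) :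
    ∀ t ∈ Set.Icc (0 : ℝ) 1,
      Filter.Tendsto (fun n => dyadicPVar q x n t) Filter.atTop (nhds 0) := by
  intro t ht
  have hc : (0:ℝ) < q - p := by linarith
  have hUC : UniformContinuousOn x (Set.Icc 0 1) :=
    isCompact_Icc.uniformContinuousOn_of_continuous hx
  rw [Metric.tendsto_atTop]
  intro ε hε
  set B : ℝ := max (V t + 1) 1 with hBdef
  have hB0 : (0:ℝ) < B := lt_of_lt_of_le one_pos (le_max_right _ _)
  have hBev : ∀ᶠ n in Filter.atTop, dyadicPVar p x n t < B := by
    filter_upwards [(hlim t ht).eventually (gt_mem_nhds (lt_add_one (V t)))] with n hn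
    exact hn.trans_le (le_max_left _ _)
  have hεB : (0:ℝ) < ε / B := div_pos hε hB0
  set η : ℝ := (ε / B) ^ (q - p)⁻¹ with hηdef
  have hη0 : 0 < η := Real.rpow_pos_of_pos hεB _
  have hηc : η ^ (q - p) = ε / B := Real.rpow_inv_rpow hεB.le (ne_of_gt hc)
  obtain ⟨δ, hδ0, hδ⟩ := Metric.uniformContinuousOn_iff.mp hUC η hη0
  obtain ⟨N, hN⟩ := exists_pow_lt_of_lt_one hδ0 (by norm_num : (1:ℝ)/2 < 1)
  have hnn : ∀ (r : ℝ) (m : ℕ), 0 ≤ dyadicPVar r x m t := fun r m =>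
    Finset.sum_nonneg fun j _ => Real.rpow_nonneg (abs_nonneg _) _
  have hmem : ∀ a : ℝ, 0 ≤ a → min a t ∈ Set.Icc (0:ℝ) 1 := fun a ha =>
    ⟨le_min ha ht.1, (min_le_right _ _).trans ht.2⟩
  rw [← Filter.eventually_atTop]
  filter_upwards [hBev, Filter.eventually_ge_atTop N] with n hn hnN
  rw [Real.dist_eq, sub_zero, abs_of_nonneg (hnn q n)]
  have hsmall : ∀ j ∈ Finset.range (2^n),
      |x (min (((j : ℝ) + 1) / 2 ^ n) t) - x (min ((j : ℝ) / 2 ^ n) t)| ≤ η := by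
    intro j _
    have h1 : ((0:ℝ)) ≤ ((j : ℝ) + 1) / 2 ^ n := by positivity
    have h2 : ((0:ℝ)) ≤ (j : ℝ) / 2 ^ n := by positivity
    have hdist : dist (min (((j : ℝ) + 1) / 2 ^ n) t) (min ((j : ℝ) / 2 ^ n) t) < δ := by
      rw [Real.dist_eq]
      refine lt_of_le_of_lt ((min_lip_aux _ _ _).trans ?_) hN
      have : ((j : ℝ) + 1) / 2 ^ n - (j : ℝ) / 2 ^ n = (1/2) ^ n := by
        rw [div_pow, one_pow]; ring
      rw [this, abs_of_nonneg (by positivity)]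
      exact pow_le_pow_of_le_one (by norm_num) (by norm_num) hnN
    have := hδ _ (hmem _ h1) _ (hmem _ h2) hdist
    rw [Real.dist_eq] at this
    exact this.le
  calc dyadicPVar q x n t
      ≤ ∑ j ∈ Finset.range (2^n),
          η ^ (q - p) * |x (min (((j : ℝ) + 1) / 2 ^ n) t) - x (min ((j : ℝ) / 2 ^ n) t)| ^ p := by
        apply Finset.sum_le_sum
        intro j hj
        have habs := hsmall j hj
        set D := |x (min (((j : ℝ) + 1) / 2 ^ n) t) - x (min ((j : ℝ) / 2 ^ n) t)| with hD
        have hDnn : 0 ≤ D := abs_nonneg _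
        have : D ^ q = D ^ (q - p) * D ^ p := by
          rw [← Real.rpow_add' hDnn (by simp; linarith)]
          ring_nf
        rw [this]
        exact mul_le_mul_of_nonneg_right (Real.rpow_le_rpow hDnn habs hc.le)
          (Real.rpow_nonneg hDnn _)
    _ = η ^ (q - p) * dyadicPVar p x n t := by rw [dyadicPVar, Finset.mul_sum]
    _ < η ^ (q - p) * B := by
        exact mul_lt_mul_of_pos_left hn (Real.rpow_pos_of_pos hη0 _)
    _ = ε := by rw [hηc]; field_simp
end

section
/- Fix p > 1. Suppose there exists x ∈ C^{1/p}([0,1]) with linear dyadic p-th variation [x]^{(p)}_𝕋(t) = C_p·t for some constant C_p > 0. Let h ∈ C^1([0,1]) be non-decreasing with h(0) = 0 and suppose g := (h'/C_p)^{1/p} has vanishing dyadic p-th variation, [g]^{(p)}_𝕋 ≡ 0. Then y := g·x belongs to V^p_𝕋 and [y]^{(p)}_𝕋(t) = h(t) for all t ∈ [0,1]. -/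
open Set Finset Filter Topology

lemma sum_range_mul_eq_sum_sum {M : Type*} [AddCommMonoid M] (f : ℕ → M) (a b : ℕ) :
    ∑ j ∈ range (a * b), f j = ∑ k ∈ range a, ∑ r ∈ range b, f (k * b + r) := by
  induction a with
  | zero => simp
  | succ a ih => rw [sum_range_succ, ← ih, Nat.succ_mul, sum_range_add]

lemma tendsto_of_forall_eventually_dist_le {α E : Type*} [PseudoMetricSpace E] {l : Filter α}
    {u : α → E} {L : E}
    (h : ∀ ε > 0, ∃ v : α → E, ∃ r, Tendsto v l (𝓝 r) ∧ dist r L ≤ ε ∧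
      ∀ᶠ n in l, dist (u n) (v n) ≤ ε) :
    Tendsto u l (𝓝 L) := by
  refine Metric.tendsto_nhds.2 fun ε hε => ?_
  obtain ⟨v, r, hv, hr, huv⟩ := h (ε / 3) (by positivity)
  filter_upwards [huv, Metric.tendsto_nhds.1 hv (ε / 3) (by positivity)] with n h1 h2
  calc dist (u n) L ≤ dist (u n) (v n) + dist (v n) r + dist r L := dist_triangle4 _ _ _ _
    _ < ε := by linarith

lemma exists_dyadic_modulus_of_continuousOn {s : Set ℝ} (hs : IsCompact s) {f : ℝ → ℝ}
    (hf : ContinuousOn f s) {ε : ℝ} (hε : 0 < ε) :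
    ∃ m : ℕ, ∀ u ∈ s, ∀ v ∈ s, |u - v| ≤ 1 / 2 ^ m → |f u - f v| ≤ ε := by
  obtain ⟨δ, hδ, hfδ⟩ :=
    Metric.uniformContinuousOn_iff.1 (hs.uniformContinuousOn_of_continuous hf) ε hε
  obtain ⟨m, hm⟩ := exists_pow_lt_of_lt_one hδ (by norm_num : (1 : ℝ) / 2 < 1)
  refine ⟨m, fun u hu v hv huv => (hfδ u hu v hv ?_).le⟩
  rw [Real.dist_eq]
  rw [div_pow, one_pow] at hm
  linarith

lemma tendsto_sum_abs_add_rpow {α ι : Type*} {l : Filter α} {s : α → Finset ι}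
    {a b : α → ι → ℝ} {p L : ℝ} (hp : 1 ≤ p)
    (ha : Tendsto (fun n => ∑ i ∈ s n, |a n i| ^ p) l (𝓝 L))
    (hb : Tendsto (fun n => ∑ i ∈ s n, |b n i| ^ p) l (𝓝 0)) :
    Tendsto (fun n => ∑ i ∈ s n, |a n i + b n i| ^ p) l (𝓝 L) := by
  have hp0 : 0 < p := zero_lt_one.trans_le hp
  rcases l.eq_or_neBot with rfl | _
  · exact tendsto_bot
  have hL : 0 ≤ L := ge_of_tendsto' ha fun n => sum_nonneg fun i _ => by positivity
  set N : (ι → ℝ) → α → ℝ := fun f n => (∑ i ∈ s n, |f i| ^ p) ^ p⁻¹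
  have hNa : Tendsto (fun n => N (a n) n) l (𝓝 (L ^ p⁻¹)) :=
    ha.rpow_const (Or.inr (by positivity))
  have hNb : Tendsto (fun n => N (b n) n) l (𝓝 0) := by
    simpa [Real.zero_rpow (inv_ne_zero hp0.ne')] using
      hb.rpow_const (p := p⁻¹) (Or.inr (by positivity))
  have hupper : ∀ n, N (a n + b n) n ≤ N (a n) n + N (b n) n := fun n => by
    simpa only [N, one_div, Pi.add_apply] using Real.Lp_add_le (s n) (a n) (b n) hp
  have hlower : ∀ n, N (a n) n - N (b n) n ≤ N (a n + b n) n := fun n => by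
    have := Real.Lp_add_le (s n) (a n + b n) (-b n) hp
    simp only [one_div, Pi.add_apply, Pi.neg_apply, add_neg_cancel_right, abs_neg] at this
    exact sub_le_iff_le_add.2 this
  have hN : Tendsto (fun n => N (a n + b n) n) l (𝓝 (L ^ p⁻¹)) := by
    refine tendsto_of_tendsto_of_tendsto_of_le_of_le (g := fun n => N (a n) n - N (b n) n)
      (h := fun n => N (a n) n + N (b n) n) ?_ ?_ hlower hupper
    · simpa using hNa.sub hNb
    · simpa using hNa.add hNb
  have hpow := hN.rpow_const (p := p) (Or.inr hp0.le)
  simp only [N, Pi.add_apply] at hpow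
  rwa [Real.rpow_inv_rpow hL hp0.ne',
    funext fun n => Real.rpow_inv_rpow (sum_nonneg fun i _ => by positivity) hp0.ne'] at hpow

lemma exists_abs_le_of_holder {x : ℝ → ℝ} {C α : ℝ} (hα : 0 ≤ α)
    (hx : ∀ s ∈ Icc (0 : ℝ) 1, ∀ t ∈ Icc (0 : ℝ) 1, |x t - x s| ≤ C * |t - s| ^ α) :
    ∃ M, ∀ u ∈ Icc (0 : ℝ) 1, |x u| ≤ M := by
  refine ⟨|x 0| + |C|, fun u hu => ?_⟩
  have hpow : |u - 0| ^ α ≤ 1 :=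
    Real.rpow_le_one (abs_nonneg _) (by rw [sub_zero, abs_of_nonneg hu.1]; exact hu.2) hα
  have hCpow : C * |u - 0| ^ α ≤ |C| := calc
    C * |u - 0| ^ α ≤ |C| * |u - 0| ^ α := by gcongr; exact le_abs_self C
    _ ≤ |C| := mul_le_of_le_one_right (abs_nonneg C) hpow
  linarith [hx 0 (left_mem_Icc.2 zero_le_one) u hu, abs_sub_abs_le_abs_sub (x u) (x 0)]

noncomputable def dyadicPoint (n : ℕ) (t : ℝ) (j : ℕ) : ℝ := min ((j : ℝ) / 2 ^ n) t

section DyadicPoint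

variable {n : ℕ} {t : ℝ}

lemma dyadicPoint_mem_Icc (ht : t ∈ Icc (0 : ℝ) 1) (j : ℕ) :
    dyadicPoint n t j ∈ Icc (0 : ℝ) 1 :=
  ⟨le_min (by positivity) ht.1, (min_le_right _ _).trans ht.2⟩

lemma dyadicPoint_zero (ht : 0 ≤ t) : dyadicPoint n t 0 = 0 := by
  simp [dyadicPoint, ht]

lemma dyadicPoint_two_pow (ht : t ≤ 1) : dyadicPoint n t (2 ^ n) = t := by
  simp [dyadicPoint, ht]

lemma monotone_dyadicPoint : Monotone (dyadicPoint n t) := fun i j hij =>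
  min_le_min_right t (by gcongr)

lemma dyadicPoint_succ_sub_le (j : ℕ) :
    dyadicPoint n t (j + 1) - dyadicPoint n t j ≤ 1 / 2 ^ n := by
  have hsucc : ((j + 1 : ℕ) : ℝ) / 2 ^ n = j / 2 ^ n + 1 / 2 ^ n := by push_cast; ring
  have hmesh : (0 : ℝ) ≤ 1 / 2 ^ n := by positivity
  simp only [dyadicPoint, hsucc]
  rcases le_total ((j : ℝ) / 2 ^ n) t with h | h
  · linarith [min_eq_left h, min_le_left ((j : ℝ) / 2 ^ n + 1 / 2 ^ n) t]
  · linarith [min_eq_right h, min_le_right ((j : ℝ) / 2 ^ n + 1 / 2 ^ n) t]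

lemma dyadicPoint_mul_two_pow_sub {m : ℕ} (hmn : m ≤ n) (k : ℕ) :
    dyadicPoint n t (k * 2 ^ (n - m)) = dyadicPoint m t k := by
  have h : (2 : ℝ) ^ n = 2 ^ m * 2 ^ (n - m) := by rw [← pow_add, Nat.add_sub_cancel' hmn]
  simp only [dyadicPoint, Nat.cast_mul, Nat.cast_pow, Nat.cast_ofNat, h]
  rw [mul_div_mul_right _ _ (by positivity)]

lemma dyadicPoint_dyadicPoint (i j : ℕ) :
    dyadicPoint n (dyadicPoint n t j) i = dyadicPoint n t (min i j) := by
  simp only [dyadicPoint, ← min_assoc, Nat.cast_min]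
  congr 1
  exact min_div_div_right (by positivity) _ _

end DyadicPoint

lemma dyadicPVar_eq_sum (p : ℝ) (x : ℝ → ℝ) (n : ℕ) (t : ℝ) :
    dyadicPVar p x n t =
      ∑ j ∈ range (2 ^ n), |x (dyadicPoint n t (j + 1)) - x (dyadicPoint n t j)| ^ p := by
  simp [dyadicPVar, dyadicPoint]

lemma dyadicPVar_dyadicPoint {p : ℝ} (hp : p ≠ 0) (x : ℝ → ℝ) {n j : ℕ} (hj : j ≤ 2 ^ n)
    (t : ℝ) :
    dyadicPVar p x n (dyadicPoint n t j) =
      ∑ i ∈ range j, |x (dyadicPoint n t (i + 1)) - x (dyadicPoint n t i)| ^ p := by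
  rw [dyadicPVar_eq_sum, ← sum_range_add_sum_Ico _ hj, sum_eq_zero (s := Ico j _), add_zero]
  · refine sum_congr rfl fun i hi => ?_
    have hi := mem_range.1 hi
    simp only [dyadicPoint_dyadicPoint, min_eq_left hi.le, min_eq_left (Nat.succ_le_of_lt hi)]
  · intro i hi
    have hi := (mem_Ico.1 hi).1
    simp [dyadicPoint_dyadicPoint, min_eq_right hi, min_eq_right (hi.trans i.le_succ), hp]

noncomputable def dyadicStieltjesSum (f F : ℝ → ℝ) (m : ℕ) (t : ℝ) : ℝ :=
  ∑ k ∈ range (2 ^ m),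
    f (dyadicPoint m t k) * (F (dyadicPoint m t (k + 1)) - F (dyadicPoint m t k))

lemma abs_dyadicStieltjesSum_sub_le {f : ℝ → ℝ} {ε : ℝ} {m n : ℕ} {t : ℝ} (hmn : m ≤ n)
    (ht : t ∈ Icc (0 : ℝ) 1)
    (hf : ∀ u ∈ Icc (0 : ℝ) 1, ∀ v ∈ Icc (0 : ℝ) 1, |u - v| ≤ 1 / 2 ^ m → |f u - f v| ≤ ε)
    (F : ℝ → ℝ) :
    |dyadicStieltjesSum f F n t - dyadicStieltjesSum f F m t| ≤
      ε * ∑ j ∈ range (2 ^ n), |F (dyadicPoint n t (j + 1)) - F (dyadicPoint n t j)| := by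
  set L := 2 ^ (n - m)
  set σ := dyadicPoint n t
  have h2n : 2 ^ n = 2 ^ m * L := by rw [← pow_add, Nat.add_sub_cancel' hmn]
  have hcoarse : ∀ k, dyadicPoint m t k = σ (k * L) := fun k =>
    (dyadicPoint_mul_two_pow_sub hmn k).symm
  -- the `k`-th coarse interval is the union of the fine ones `k * L + r`, `r < L`
  have hblock : ∀ k, f (dyadicPoint m t k) * (F (dyadicPoint m t (k + 1)) - F (dyadicPoint m t k))
      = ∑ r ∈ range L, f (dyadicPoint m t k) * (F (σ (k * L + (r + 1))) - F (σ (k * L + r))) := by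
    intro k
    rw [← mul_sum, sum_range_sub (fun r => F (σ (k * L + r))), hcoarse, hcoarse, add_zero,
      Nat.succ_mul]
  have hosc : ∀ k r, r < L → |f (σ (k * L + r)) - f (dyadicPoint m t k)| ≤ ε := by
    intro k r hr
    have hlo : dyadicPoint m t k ≤ σ (k * L + r) := by
      rw [hcoarse]; exact monotone_dyadicPoint (by omega)
    have hhi : σ (k * L + r) ≤ dyadicPoint m t (k + 1) := by
      rw [hcoarse]; exact monotone_dyadicPoint (by rw [Nat.succ_mul]; omega)
    refine hf _ (dyadicPoint_mem_Icc ht _) _ (dyadicPoint_mem_Icc ht _) ?_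
    rw [abs_of_nonneg (sub_nonneg.2 hlo)]
    linarith [dyadicPoint_succ_sub_le (n := m) (t := t) k]
  unfold dyadicStieltjesSum
  rw [h2n, sum_range_mul_eq_sum_sum, sum_range_mul_eq_sum_sum, ← sum_sub_distrib, mul_sum]
  refine (abs_sum_le_sum_abs _ _).trans (sum_le_sum fun k _ => ?_)
  rw [hblock k, ← sum_sub_distrib, mul_sum]
  refine (abs_sum_le_sum_abs _ _).trans (sum_le_sum fun r hr => ?_)
  rw [← add_assoc, ← sub_mul, abs_mul]
  exact mul_le_mul_of_nonneg_right (hosc k r (mem_range.1 hr)) (abs_nonneg _)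

lemma abs_sub_sub_dyadicStieltjesSum_id_le {h h' : ℝ → ℝ} {ε : ℝ} {m : ℕ} {t : ℝ}
    (hderiv : ∀ u ∈ Icc (0 : ℝ) 1, HasDerivWithinAt h (h' u) (Icc 0 1) u)
    (ht : t ∈ Icc (0 : ℝ) 1)
    (hh' : ∀ u ∈ Icc (0 : ℝ) 1, ∀ v ∈ Icc (0 : ℝ) 1, |u - v| ≤ 1 / 2 ^ m → |h' u - h' v| ≤ ε) :
    |h t - h 0 - dyadicStieltjesSum h' id m t| ≤ ε * t := by
  set a := dyadicPoint m t
  have ha0 : a 0 = 0 := dyadicPoint_zero ht.1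
  have haT : a (2 ^ m) = t := dyadicPoint_two_pow ht.2
  have hblock : ∀ k, |h (a (k + 1)) - h (a k) - h' (a k) * (a (k + 1) - a k)| ≤
      ε * (a (k + 1) - a k) := by
    intro k
    have hak : a k ≤ a (k + 1) := monotone_dyadicPoint k.le_succ
    have hsub : Icc (a k) (a (k + 1)) ⊆ Icc 0 1 :=
      Icc_subset_Icc (dyadicPoint_mem_Icc ht k).1 (dyadicPoint_mem_Icc ht (k + 1)).2
    have hmvt := (convex_Icc (a k) (a (k + 1))).norm_image_sub_le_of_norm_hasDerivWithin_le
      (f := fun u => h u - h' (a k) * u) (f' := fun u => h' u - h' (a k) * 1)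
      (fun u hu => ((hderiv u (hsub hu)).mono hsub).sub ((hasDerivWithinAt_id u _).const_mul _))
      (fun u hu => hh' u (hsub hu) (a k) (hsub (left_mem_Icc.2 hak)) (by
        rw [abs_of_nonneg (sub_nonneg.2 hu.1)]
        linarith [hu.2, dyadicPoint_succ_sub_le (n := m) (t := t) k]) |>.trans_eq' (by simp))
      (left_mem_Icc.2 hak) (right_mem_Icc.2 hak)
    simp only [Real.norm_eq_abs, abs_of_nonneg (sub_nonneg.2 hak)] at hmvt
    convert hmvt using 2
    ring
  have htel : h t - h 0 - dyadicStieltjesSum h' id m t =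
      ∑ k ∈ range (2 ^ m), (h (a (k + 1)) - h (a k) - h' (a k) * (a (k + 1) - a k)) := by
    rw [sum_sub_distrib, sum_range_sub (fun k => h (a k)), haT, ha0]
    rfl
  calc |h t - h 0 - dyadicStieltjesSum h' id m t|
      ≤ ∑ k ∈ range (2 ^ m), ε * (a (k + 1) - a k) := by
        rw [htel]; exact (abs_sum_le_sum_abs _ _).trans (sum_le_sum fun k _ => hblock k)
    _ = ε * t := by
        rw [← mul_sum, sum_range_sub a, haT, ha0, sub_zero]

lemma dyadicPVar_dyadicPoint_succ_sub {p : ℝ} (hp : p ≠ 0) (x : ℝ → ℝ) {n j : ℕ}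
    (hj : j < 2 ^ n) (t : ℝ) :
    dyadicPVar p x n (dyadicPoint n t (j + 1)) - dyadicPVar p x n (dyadicPoint n t j) =
      |x (dyadicPoint n t (j + 1)) - x (dyadicPoint n t j)| ^ p := by
  rw [dyadicPVar_dyadicPoint hp x hj, dyadicPVar_dyadicPoint hp x hj.le, sum_range_succ,
    add_sub_cancel_left]

lemma dyadicStieltjesSum_dyadicPVar {p : ℝ} (hp : p ≠ 0) (f x : ℝ → ℝ) (n : ℕ) (t : ℝ) :
    dyadicStieltjesSum f (dyadicPVar p x n) n t =
      ∑ j ∈ range (2 ^ n),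
        f (dyadicPoint n t j) * |x (dyadicPoint n t (j + 1)) - x (dyadicPoint n t j)| ^ p :=
  sum_congr rfl fun j hj => by rw [dyadicPVar_dyadicPoint_succ_sub hp x (mem_range.1 hj)]

lemma sum_abs_dyadicPVar_dyadicPoint_succ_sub {p : ℝ} (hp : p ≠ 0) (x : ℝ → ℝ) (n : ℕ)
    (t : ℝ) :
    ∑ j ∈ range (2 ^ n), |dyadicPVar p x n (dyadicPoint n t (j + 1)) -
      dyadicPVar p x n (dyadicPoint n t j)| = dyadicPVar p x n t := by
  rw [dyadicPVar_eq_sum]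
  refine sum_congr rfl fun j hj => ?_
  rw [dyadicPVar_dyadicPoint_succ_sub hp x (mem_range.1 hj), abs_of_nonneg (by positivity)]

lemma tendsto_dyadicStieltjesSum_dyadicPVar {p c : ℝ} (hp : p ≠ 0) {x : ℝ → ℝ}
    (hxvar : ∀ s ∈ Icc (0 : ℝ) 1, Tendsto (fun n => dyadicPVar p x n s) atTop (𝓝 (c * s)))
    {h h' : ℝ → ℝ} (hderiv : ∀ u ∈ Icc (0 : ℝ) 1, HasDerivWithinAt h (h' u) (Icc 0 1) u)
    (hh'cont : ContinuousOn h' (Icc 0 1)) {t : ℝ} (ht : t ∈ Icc (0 : ℝ) 1) :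
    Tendsto (fun n => dyadicStieltjesSum h' (dyadicPVar p x n) n t) atTop
      (𝓝 (c * (h t - h 0))) := by
  refine tendsto_of_forall_eventually_dist_le fun ε hε => ?_
  set η := ε / (|c| + 1)
  have hη : 0 < η := by positivity
  have hηε : η * (|c| + 1) = ε := div_mul_cancel₀ ε (by positivity)
  obtain ⟨m, hm⟩ := exists_dyadic_modulus_of_continuousOn isCompact_Icc hh'cont hη
  refine ⟨fun n => dyadicStieltjesSum h' (dyadicPVar p x n) m t,
    c * dyadicStieltjesSum h' id m t, ?_, ?_, ?_⟩
  · have hlim : c * dyadicStieltjesSum h' id m t = dyadicStieltjesSum h' (c * ·) m t := by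
      simp only [dyadicStieltjesSum, mul_sum, id]
      exact sum_congr rfl fun k _ => by ring
    rw [hlim]
    exact tendsto_finsetSum _ fun k _ => ((hxvar _ (dyadicPoint_mem_Icc ht _)).sub
      (hxvar _ (dyadicPoint_mem_Icc ht _))).const_mul _
  · calc dist (c * dyadicStieltjesSum h' id m t) (c * (h t - h 0))
        = |c| * |h t - h 0 - dyadicStieltjesSum h' id m t| := by
          rw [Real.dist_eq, ← mul_sub, abs_mul, abs_sub_comm]
      _ ≤ |c| * (η * t) := by
          gcongr; exact abs_sub_sub_dyadicStieltjesSum_id_le hderiv ht hm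
      _ ≤ (|c| + 1) * (η * 1) := by
          have := mul_nonneg hη.le ht.1
          gcongr
          exacts [by linarith, ht.2]
      _ = ε := by rw [mul_one, mul_comm, hηε]
  · have hbound : ∀ᶠ n in atTop, dyadicPVar p x n t ≤ |c| + 1 :=
      (hxvar t ht).eventually (eventually_le_nhds (by
        nlinarith [le_abs_self c, abs_nonneg c, ht.1, ht.2]))
    filter_upwards [hbound, eventually_ge_atTop m] with n hn hmn
    calc dist (dyadicStieltjesSum h' (dyadicPVar p x n) n t)
          (dyadicStieltjesSum h' (dyadicPVar p x n) m t)
        ≤ η * dyadicPVar p x n t := by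
          rw [Real.dist_eq, ← sum_abs_dyadicPVar_dyadicPoint_succ_sub hp x n t]
          exact abs_dyadicStieltjesSum_sub_le hmn ht hm _
      _ ≤ η * (|c| + 1) := by gcongr
      _ = ε := hηε

/-- given a (1/p)-Hölder path `x` with linear dyadic p-th variation
`C_p·t`, and `h ∈ C¹` non-decreasing with `h(0)=0` such that `g := (h'/C_p)^{1/p}` has
vanishing dyadic p-th variation, the path `y := g·x` satisfies `[y]^{(p)}_𝕋(t) = h(t)`. -/
theorem stmt4 (p Cp : ℝ) (hp : 1 < p) (hCp : 0 < Cp)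
    (x : ℝ → ℝ)
    (hxHolder : ∃ C : ℝ, ∀ s ∈ Set.Icc (0 : ℝ) 1, ∀ t ∈ Set.Icc (0 : ℝ) 1,
      |x t - x s| ≤ C * |t - s| ^ (1 / p))
    (hxvar : ∀ t ∈ Set.Icc (0 : ℝ) 1,
      Filter.Tendsto (fun n => dyadicPVar p x n t) Filter.atTop (nhds (Cp * t)))
    (h h' : ℝ → ℝ)
    (hderiv : ∀ t ∈ Set.Icc (0 : ℝ) 1, HasDerivWithinAt h (h' t) (Set.Icc 0 1) t)
    (hh'cont : ContinuousOn h' (Set.Icc 0 1))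
    (hmono : MonotoneOn h (Set.Icc 0 1)) (hh0 : h 0 = 0)
    (hgvar : ∀ t ∈ Set.Icc (0 : ℝ) 1,
      Filter.Tendsto (fun n => dyadicPVar p (fun u => (h' u / Cp) ^ (1 / p)) n t)
        Filter.atTop (nhds 0)) :
    ∀ t ∈ Set.Icc (0 : ℝ) 1,
      Filter.Tendsto
        (fun n => dyadicPVar p (fun u => (h' u / Cp) ^ (1 / p) * x u) n t)
        Filter.atTop (nhds (h t)) := by
  intro t ht
  obtain ⟨C, hC⟩ := hxHolder
  obtain ⟨M, hM⟩ := exists_abs_le_of_holder (by positivity) hC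
  have hp0 : p ≠ 0 := by positivity
  set g : ℝ → ℝ := fun u => (h' u / Cp) ^ (1 / p)
  have hgp : ∀ u ∈ Icc (0 : ℝ) 1, |g u| ^ p = h' u / Cp := fun u hu => by
    have hh'u : 0 ≤ h' u := (hderiv u hu).nonneg_of_monotoneOn
      (uniqueDiffOn_Icc zero_lt_one u hu).accPt hmono
    have hbase : 0 ≤ h' u / Cp := div_nonneg hh'u hCp.le
    rw [abs_of_nonneg (Real.rpow_nonneg hbase _), ← Real.rpow_mul hbase, one_div_mul_cancel hp0,
      Real.rpow_one]
  have hmain : Tendsto (fun n => ∑ j ∈ range (2 ^ n),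
      |g (dyadicPoint n t j) * (x (dyadicPoint n t (j + 1)) - x (dyadicPoint n t j))| ^ p)
      atTop (𝓝 (h t)) := by
    have := (tendsto_dyadicStieltjesSum_dyadicPVar hp0 hxvar hderiv hh'cont ht).const_mul Cp⁻¹
    rw [hh0, sub_zero, inv_mul_cancel_left₀ hCp.ne'] at this
    refine this.congr fun n => ?_
    rw [dyadicStieltjesSum_dyadicPVar hp0, mul_sum]
    refine sum_congr rfl fun j _ => ?_
    rw [abs_mul, Real.mul_rpow (abs_nonneg _) (abs_nonneg _), hgp _ (dyadicPoint_mem_Icc ht j)]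
    ring
  have hpert : Tendsto (fun n => ∑ j ∈ range (2 ^ n),
      |x (dyadicPoint n t (j + 1)) * (g (dyadicPoint n t (j + 1)) - g (dyadicPoint n t j))| ^ p)
      atTop (𝓝 0) := by
    have hB := (hgvar t ht).const_mul (M ^ p)
    rw [mul_zero] at hB
    refine squeeze_zero (fun n => by positivity) (fun n => ?_) hB
    rw [dyadicPVar_eq_sum, mul_sum]
    refine sum_le_sum fun j _ => ?_
    rw [abs_mul, Real.mul_rpow (abs_nonneg _) (abs_nonneg _)]
    gcongr
    exact hM _ (dyadicPoint_mem_Icc ht _)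
  refine (tendsto_sum_abs_add_rpow hp.le hmain hpert).congr fun n => ?_
  rw [dyadicPVar_eq_sum]
  refine sum_congr rfl fun j _ => ?_
  congr 2
  ring
end

section
/- Let q ≥ 2 and let ℙ be a dense q-refining partition sequence of [0,1] that is balanced, in the sense that there exists c > 0 such that for every n, max_i |t_{i+1}^n − t_i^n| ≤ c · min_i |t_{i+1}^n − t_i^n|. Then the associated increasing homeomorphism φ with φ(t_i^n) = i/q^n is Lipschitz, and its inverse φ^{−1} is Lipschitz as well. -/
/-!
Balancedness pins every gap of the level-`n` partition between `1/(c qⁿ)` and `c/qⁿ`, since its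
`qⁿ` gaps sum to `1`. Hence on the level-`n` grid the map `t_i ↦ i/qⁿ` changes distances by at most
the factor `c` in either direction. Refinement puts any two partition points on a common level, so
both inequalities hold on the dense set of partition points, and continuity of `φ` and `φ⁻¹` carries
them to all of `[0,1]`.
-/

open Finset
open scoped NNReal

section Balanced

variable {f : ℕ → ℝ} {N : ℕ} {c : ℝ} (hf : f N - f 0 = 1)
  (hbal : ∀ i < N, ∀ j < N, f (i + 1) - f i ≤ c * (f (j + 1) - f j))
include hf hbal

lemma inv_le_mul_sub_of_balanced {k : ℕ} (hk : k < N) : (N : ℝ)⁻¹ ≤ c * (f (k + 1) - f k) := by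
  have hN : (0 : ℝ) < N := by exact_mod_cast Nat.zero_lt_of_lt hk
  have : (1 : ℝ) ≤ N * (c * (f (k + 1) - f k)) :=
    calc (1 : ℝ) = ∑ i ∈ range N, (f (i + 1) - f i) := by rw [sum_range_sub, hf]
      _ ≤ ∑ _i ∈ range N, c * (f (k + 1) - f k) :=
        sum_le_sum fun i hi => hbal i (mem_range.1 hi) k hk
      _ = N * (c * (f (k + 1) - f k)) := by rw [sum_const, card_range, nsmul_eq_mul]
  rwa [inv_le_iff_one_le_mul₀ hN, mul_comm]

lemma sub_le_div_of_balanced {k : ℕ} (hk : k < N) : f (k + 1) - f k ≤ c / N := by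
  have hN : (0 : ℝ) < N := by exact_mod_cast Nat.zero_lt_of_lt hk
  have : N * (f (k + 1) - f k) ≤ c :=
    calc N * (f (k + 1) - f k) = ∑ _j ∈ range N, (f (k + 1) - f k) := by
          rw [sum_const, card_range, nsmul_eq_mul]
      _ ≤ ∑ j ∈ range N, c * (f (j + 1) - f j) :=
        sum_le_sum fun j hj => hbal k hk j (mem_range.1 hj)
      _ = c := by rw [← mul_sum, sum_range_sub, hf, mul_one]
  rwa [le_div_iff₀ hN, mul_comm]

lemma sub_div_le_mul_sub_of_balanced {i j : ℕ} (hij : i ≤ j) (hj : j ≤ N) :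
    ((j : ℝ) - i) / N ≤ c * (f j - f i) :=
  calc ((j : ℝ) - i) / N = ∑ _k ∈ Ico i j, (N : ℝ)⁻¹ := by
        rw [sum_const, Nat.card_Ico, nsmul_eq_mul, Nat.cast_sub hij, div_eq_mul_inv]
    _ ≤ ∑ k ∈ Ico i j, c * (f (k + 1) - f k) :=
        sum_le_sum fun k hk => inv_le_mul_sub_of_balanced hf hbal ((mem_Ico.1 hk).2.trans_le hj)
    _ = c * (f j - f i) := by rw [← mul_sum, sum_Ico_sub f hij]

lemma sub_le_mul_sub_div_of_balanced {i j : ℕ} (hij : i ≤ j) (hj : j ≤ N) :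
    f j - f i ≤ c * (((j : ℝ) - i) / N) :=
  calc f j - f i = ∑ k ∈ Ico i j, (f (k + 1) - f k) := (sum_Ico_sub f hij).symm
    _ ≤ ∑ _k ∈ Ico i j, c / N :=
        sum_le_sum fun k hk => sub_le_div_of_balanced hf hbal ((mem_Ico.1 hk).2.trans_le hj)
    _ = c * (((j : ℝ) - i) / N) := by
        rw [sum_const, Nat.card_Ico, nsmul_eq_mul, Nat.cast_sub hij]
        ring

lemma dist_div_le_and_dist_le_of_balanced (hc : 0 < c) {i j : ℕ} (hi : i ≤ N) (hj : j ≤ N) :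
    dist ((i : ℝ) / N) ((j : ℝ) / N) ≤ c * dist (f i) (f j) ∧
      dist (f i) (f j) ≤ c * dist ((i : ℝ) / N) ((j : ℝ) / N) := by
  wlog hij : i ≤ j generalizing i j
  · simpa only [dist_comm] using this hj hi (le_of_not_ge hij)
  have hlow := sub_div_le_mul_sub_of_balanced hf hbal hij hj
  have hupp := sub_le_mul_sub_div_of_balanced hf hbal hij hj
  have hgrid : (0 : ℝ) ≤ ((j : ℝ) - i) / N := div_nonneg (by simp [hij]) N.cast_nonneg
  have hfij : 0 ≤ f j - f i := nonneg_of_mul_nonneg_right (hgrid.trans hlow) hc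
  rw [dist_comm (f i), dist_comm ((i : ℝ) / N), Real.dist_eq, Real.dist_eq, ← sub_div,
    abs_of_nonneg hfij, abs_of_nonneg hgrid]
  exact ⟨hlow, hupp⟩

end Balanced

section Refining

lemma pow_mul_le_pow_add {q n i : ℕ} (hi : i ≤ q ^ n) (m : ℕ) : q ^ m * i ≤ q ^ (n + m) := by
  rw [pow_add, mul_comm (q ^ n)]
  exact Nat.mul_le_mul_left _ hi

variable {q : ℕ} {pts : ℕ → ℕ → ℝ} (hrefine : ∀ n, ∀ i ≤ q ^ n, pts n i = pts (n + 1) (q * i))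
include hrefine

lemma pts_add_pow_mul_of_refining {n i : ℕ} (hi : i ≤ q ^ n) (m : ℕ) :
    pts (n + m) (q ^ m * i) = pts n i := by
  induction m with
  | zero => simp
  | succ m ih =>
    rw [← ih, hrefine _ _ (pow_mul_le_pow_add hi m), ← mul_assoc, ← pow_succ', add_assoc]

lemma exists_common_level_of_refining {n m i j : ℕ} (hi : i ≤ q ^ n) (hj : j ≤ q ^ m) :
    ∃ N i' j', i' ≤ q ^ N ∧ j' ≤ q ^ N ∧ pts N i' = pts n i ∧ pts N j' = pts m j := by
  refine ⟨m + n, q ^ m * i, q ^ n * j, ?_, pow_mul_le_pow_add hj n, ?_,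
    pts_add_pow_mul_of_refining hrefine hj n⟩
  · rw [add_comm]
    exact pow_mul_le_pow_add hi m
  · rw [add_comm, pts_add_pow_mul_of_refining hrefine hi m]

end Refining

lemma Dense.lipschitzWith_of_lipschitzOnWith {α β : Type*} [PseudoEMetricSpace α]
    [PseudoEMetricSpace β] {s : Set α} (hs : Dense s) {f : α → β} {K : ℝ≥0} (hf : Continuous f)
    (hfs : LipschitzOnWith K f s) : LipschitzWith K f := by
  rw [← lipschitzOnWith_univ, ← hs.closure_eq]
  exact hfs.closure hf.continuousOn

lemma Homeomorph.lipschitzWith_and_symm_of_dense {α β : Type*} [PseudoMetricSpace α]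
    [PseudoMetricSpace β] (φ : α ≃ₜ β) {s : Set α} (hs : Dense s) {K : ℝ≥0}
    (h : ∀ a ∈ s, ∀ b ∈ s, dist (φ a) (φ b) ≤ K * dist a b ∧ dist a b ≤ K * dist (φ a) (φ b)) :
    LipschitzWith K φ ∧ LipschitzWith K φ.symm := by
  refine ⟨hs.lipschitzWith_of_lipschitzOnWith φ.continuous <|
    LipschitzOnWith.of_dist_le_mul fun a ha b hb => (h a ha b hb).1, ?_⟩
  refine (φ.surjective.denseRange.dense_image φ.continuous hs).lipschitzWith_of_lipschitzOnWith
    φ.symm.continuous <| LipschitzOnWith.of_dist_le_mul ?_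
  rintro _ ⟨a, ha, rfl⟩ _ ⟨b, hb, rfl⟩
  simpa only [Homeomorph.symm_apply_apply] using (h a ha b hb).2

theorem stmt11_general (q : ℕ) (pts : ℕ → ℕ → ℝ)
    (h0 : ∀ n, pts n 0 = 0) (h1 : ∀ n, pts n (q ^ n) = 1)
    (hmem : ∀ n, ∀ i ≤ q ^ n, pts n i ∈ Set.Icc (0 : ℝ) 1)
    (hrefine : ∀ n, ∀ i ≤ q ^ n, pts n i = pts (n + 1) (q * i))
    (hdense : Set.Icc (0 : ℝ) 1 ⊆ closure {x : ℝ | ∃ n, ∃ i ≤ q ^ n, pts n i = x})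
    (c : ℝ) (hc : 0 < c)
    (hbal : ∀ n, ∀ i < q ^ n, ∀ j < q ^ n,
      pts n (i + 1) - pts n i ≤ c * (pts n (j + 1) - pts n j))
    (φ : Set.Icc (0 : ℝ) 1 ≃ₜ Set.Icc (0 : ℝ) 1)
    (hφpts : ∀ n, ∀ i, ∀ hi : i ≤ q ^ n,
      ((φ ⟨pts n i, hmem n i hi⟩ : Set.Icc (0 : ℝ) 1) : ℝ) = (i : ℝ) / q ^ n) :
    (∃ K : ℝ, 0 ≤ K ∧ ∀ a b : Set.Icc (0 : ℝ) 1,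
      |(φ a : ℝ) - (φ b : ℝ)| ≤ K * |(a : ℝ) - (b : ℝ)|) ∧
    (∃ K : ℝ, 0 ≤ K ∧ ∀ a b : Set.Icc (0 : ℝ) 1,
      |(φ.symm a : ℝ) - (φ.symm b : ℝ)| ≤ K * |(a : ℝ) - (b : ℝ)|) := by
  set S : Set (Set.Icc (0 : ℝ) 1) := {x | ∃ n, ∃ i ≤ q ^ n, (x : ℝ) = pts n i}
  have hS : Dense S := Subtype.dense_iff.2 <| hdense.trans <| closure_mono <| by
    rintro _ ⟨n, i, hi, rfl⟩
    exact ⟨⟨pts n i, hmem n i hi⟩, ⟨n, i, hi, rfl⟩, rfl⟩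
  have hpair : ∀ a ∈ S, ∀ b ∈ S,
      dist (φ a) (φ b) ≤ c * dist a b ∧ dist a b ≤ c * dist (φ a) (φ b) := by
    rintro a ⟨n, i, hi, ha⟩ b ⟨m, j, hj, hb⟩
    obtain ⟨N, i', j', hi', hj', hia, hjb⟩ := exists_common_level_of_refining hrefine hi hj
    obtain rfl : a = ⟨pts N i', hmem N i' hi'⟩ := Subtype.ext (ha.trans hia.symm)
    obtain rfl : b = ⟨pts N j', hmem N j' hj'⟩ := Subtype.ext (hb.trans hjb.symm)
    rw [Subtype.dist_eq, Subtype.dist_eq, hφpts N i' hi', hφpts N j' hj']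
    exact_mod_cast dist_div_le_and_dist_le_of_balanced (f := pts N) (N := q ^ N)
      (by rw [h1, h0, sub_zero]) (hbal N) hc hi' hj'
  have hK : (c.toNNReal : ℝ) = c := Real.coe_toNNReal c hc.le
  obtain ⟨hφ, hφsymm⟩ := φ.lipschitzWith_and_symm_of_dense hS (K := c.toNNReal) (by rwa [hK])
  refine ⟨⟨c, hc.le, fun a b => ?_⟩, ⟨c, hc.le, fun a b => ?_⟩⟩
  · simpa only [Subtype.dist_eq, Real.dist_eq, hK] using hφ.dist_le_mul a b
  · simpa only [Subtype.dist_eq, Real.dist_eq, hK] using hφsymm.dist_le_mul a b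

/-- if the dense q-refining partition sequence is balanced
(`max_i Δt_i^n ≤ c · min_i Δt_i^n` for all `n`), then the associated increasing
homeomorphism `φ` with `φ(t_i^n) = i/q^n` is Lipschitz, and so is its inverse. -/
theorem stmt11 (q : ℕ) (hq : 2 ≤ q) (pts : ℕ → ℕ → ℝ)
    (h0 : ∀ n, pts n 0 = 0) (h1 : ∀ n, pts n (q ^ n) = 1)
    (hmono : ∀ n, ∀ i < q ^ n, pts n i < pts n (i + 1))
    (hmem : ∀ n, ∀ i ≤ q ^ n, pts n i ∈ Set.Icc (0 : ℝ) 1)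
    (hrefine : ∀ n, ∀ i ≤ q ^ n, pts n i = pts (n + 1) (q * i))
    (hdense : Set.Icc (0 : ℝ) 1 ⊆ closure {x : ℝ | ∃ n, ∃ i ≤ q ^ n, pts n i = x})
    (c : ℝ) (hc : 0 < c)
    (hbal : ∀ n, ∀ i < q ^ n, ∀ j < q ^ n,
      pts n (i + 1) - pts n i ≤ c * (pts n (j + 1) - pts n j))
    (φ : Set.Icc (0 : ℝ) 1 ≃ₜ Set.Icc (0 : ℝ) 1)
    (hφmono : StrictMono (fun a => (φ a : ℝ)))
    (hφpts : ∀ n, ∀ i, ∀ hi : i ≤ q ^ n,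
      ((φ ⟨pts n i, hmem n i hi⟩ : Set.Icc (0 : ℝ) 1) : ℝ) = (i : ℝ) / q ^ n) :
    (∃ K : ℝ, 0 ≤ K ∧ ∀ a b : Set.Icc (0 : ℝ) 1,
      |(φ a : ℝ) - (φ b : ℝ)| ≤ K * |(a : ℝ) - (b : ℝ)|) ∧
    (∃ K : ℝ, 0 ≤ K ∧ ∀ a b : Set.Icc (0 : ℝ) 1,
      |(φ.symm a : ℝ) - (φ.symm b : ℝ)| ≤ K * |(a : ℝ) - (b : ℝ)|) :=
  stmt11_general q pts h0 h1 hmem hrefine hdense c hc hbal φ hφpts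
end

section
/- Let ρ ∈ (0,1), let (y_m)_{m≥0} be a bounded real sequence with y_m → y, and let (ε_j)_{j≥1} be i.i.d. Rademacher random variables (values ±1 with probability 1/2). Then for p > 1, the partial sums S_n := Σ_{j=1}^n ρ^j y_{n−j} ε_j converge in L^p to y·Z, where Z := Σ_{j=1}^∞ ρ^j ε_j converges a.s. and in L^p. In particular E[|S_n|^p] → |y|^p E[|Z|^p]. -/
/-!
The signs enter only through `|ε j ω| ≤ 1`, so the argument is pathwise. For each `ω`, `S_n(ω)`
is the convolution of the summable sequence `ρ ^ j * ε j ω` with `y_{n-j}`, which converges to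
`y * Z ω` by Tannery's theorem. If `|y_m| ≤ M`, then `S_n` and `Z` are bounded by `M / (1 - ρ)`
and `1 / (1 - ρ)`, uniformly in `n` and `ω`, so dominated convergence on the probability space
gives the `L^p` statements.
-/

open MeasureTheory Filter Finset Topology

theorem Finset.sum_Icc_one_eq_sum_range {M : Type*} [AddCommMonoid M] (f : ℕ → M) (n : ℕ) :
    ∑ j ∈ Icc 1 n, f j = ∑ i ∈ range n, f (i + 1) := by
  rw [← Ico_add_one_right_eq_Icc, sum_Ico_eq_sum_range]
  simp [add_comm]

theorem tendsto_sum_Icc_mul_of_tendsto {w a : ℕ → ℝ} {y : ℝ} (hw : Summable w)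
    (ha : Tendsto a atTop (𝓝 y)) :
    Tendsto (fun n ↦ ∑ j ∈ Icc 1 n, w j * a (n - j)) atTop (𝓝 ((∑' i, w (i + 1)) * y)) := by
  obtain ⟨M, hM⟩ := ha.abs.bddAbove_range
  have hw' : Summable fun i ↦ w (i + 1) := (summable_nat_add_iff 1).2 hw
  -- The finite sum is the `tsum` of its truncation to `i < n`, to which Tannery's theorem applies.
  have key : Tendsto (fun n ↦ ∑' i, if i < n then w (i + 1) * a (n - (i + 1)) else 0) atTop
      (𝓝 (∑' i, w (i + 1) * y)) := by
    refine tendsto_tsum_of_dominated_convergence (bound := fun i ↦ |w (i + 1)| * M)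
      (hw'.abs.mul_right M) (fun i ↦ ?_) (.of_forall fun n i ↦ ?_)
    · refine ((ha.comp (tendsto_sub_atTop_nat (i + 1))).const_mul (w (i + 1))).congr' ?_
      filter_upwards [eventually_gt_atTop i] with n hn
      simp [hn]
    · split_ifs
      · rw [Real.norm_eq_abs, abs_mul]
        exact mul_le_mul_of_nonneg_left (hM ⟨_, rfl⟩) (abs_nonneg _)
      · simpa using mul_nonneg (abs_nonneg _) ((abs_nonneg _).trans (hM ⟨0, rfl⟩))
  rw [tsum_mul_right] at key
  refine key.congr fun n ↦ ?_
  rw [tsum_eq_sum (s := range n) (fun i hi ↦ by simp_all), sum_Icc_one_eq_sum_range]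
  exact sum_congr rfl fun i hi ↦ by simp_all

theorem summable_pow_mul_of_abs_le_one {ρ : ℝ} (hρ : |ρ| < 1) {e : ℕ → ℝ} (he : ∀ j, |e j| ≤ 1) :
    Summable fun j ↦ ρ ^ j * e j :=
  .of_norm_bounded (summable_geometric_of_lt_one (abs_nonneg ρ) hρ) fun j ↦ by
    simpa [abs_mul, abs_pow] using mul_le_of_le_one_right (by positivity) (he j)

theorem abs_sum_Icc_pow_mul_mul_le {ρ : ℝ} (hρ0 : 0 ≤ ρ) (hρ1 : ρ < 1) {e a : ℕ → ℝ}
    (he : ∀ j, |e j| ≤ 1) {M : ℝ} (haM : ∀ m, |a m| ≤ M) (n : ℕ) :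
    |∑ j ∈ Icc 1 n, ρ ^ j * a (n - j) * e j| ≤ M * (1 - ρ)⁻¹ := by
  have hM : 0 ≤ M := (abs_nonneg _).trans (haM 0)
  calc |∑ j ∈ Icc 1 n, ρ ^ j * a (n - j) * e j|
      ≤ ∑ j ∈ Icc 1 n, M * ρ ^ j := by
        refine (abs_sum_le_sum_abs _ _).trans (sum_le_sum fun j _ ↦ ?_)
        rw [abs_mul, abs_mul, abs_pow, abs_of_nonneg hρ0, mul_comm M]
        exact mul_le_of_le_one_right (by positivity) (he j) |>.trans
          (mul_le_mul_of_nonneg_left (haM _) (by positivity))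
    _ = M * ∑ j ∈ Icc 1 n, ρ ^ j := (mul_sum ..).symm
    _ ≤ M * (1 - ρ)⁻¹ := by
        gcongr
        rw [← tsum_geometric_of_lt_one hρ0 hρ1]
        exact (summable_geometric_of_lt_one hρ0 hρ1).sum_le_tsum _ fun j _ ↦ by positivity

theorem norm_abs_rpow_le {x C p : ℝ} (hp : 0 ≤ p) (hx : |x| ≤ C) : ‖|x| ^ p‖ ≤ C ^ p := by
  rw [Real.norm_eq_abs, abs_of_nonneg (by positivity)]
  exact Real.rpow_le_rpow (abs_nonneg x) hx hp

section DominatedConvergence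

variable {Ω : Type*} [MeasurableSpace Ω] {μ : Measure Ω} [IsFiniteMeasure μ]
  {F : ℕ → Ω → ℝ} {f : Ω → ℝ} {C p : ℝ}

theorem tendsto_integral_abs_rpow_of_tendsto (hp : 0 ≤ p)
    (hF : ∀ n, AEStronglyMeasurable (F n) μ) (hC : ∀ n, ∀ᵐ ω ∂μ, |F n ω| ≤ C)
    (hlim : ∀ᵐ ω ∂μ, Tendsto (F · ω) atTop (𝓝 (f ω))) :
    Tendsto (fun n ↦ ∫ ω, |F n ω| ^ p ∂μ) atTop (𝓝 (∫ ω, |f ω| ^ p ∂μ)) :=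
  tendsto_integral_of_dominated_convergence (fun _ ↦ C ^ p)
    (fun n ↦
      ((Real.continuous_rpow_const hp).comp continuous_abs).comp_aestronglyMeasurable (hF n))
    (integrable_const _) (fun n ↦ (hC n).mono fun _ h ↦ norm_abs_rpow_le hp h)
    (hlim.mono fun _ h ↦ h.abs.rpow_const (Or.inr hp))

theorem tendsto_integral_abs_sub_rpow_of_tendsto (hp : 0 < p)
    (hF : ∀ n, AEStronglyMeasurable (F n) μ) (hC : ∀ n, ∀ᵐ ω ∂μ, |F n ω| ≤ C)
    (hlim : ∀ᵐ ω ∂μ, Tendsto (F · ω) atTop (𝓝 (f ω))) :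
    Tendsto (fun n ↦ ∫ ω, |F n ω - f ω| ^ p ∂μ) atTop (𝓝 0) := by
  have hf : AEStronglyMeasurable f μ := aestronglyMeasurable_of_tendsto_ae atTop hF hlim
  have hfC : ∀ᵐ ω ∂μ, |f ω| ≤ C := by
    filter_upwards [hlim, ae_all_iff.2 hC] with ω hω hCω
    exact le_of_tendsto' hω.abs hCω
  simpa [Real.zero_rpow hp.ne'] using
    tendsto_integral_abs_rpow_of_tendsto (C := C + C) (f := 0) hp.le (fun n ↦ (hF n).sub hf)
      (fun n ↦ (hC n).and hfC |>.mono fun ω h ↦ (abs_sub _ _).trans (add_le_add h.1 h.2))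
      (hlim.mono fun ω h ↦ by simpa using h.sub_const (f ω))

end DominatedConvergence

theorem stmt14_general (ρ : ℝ) (hρ : ρ ∈ Set.Ioo (0 : ℝ) 1)
    (yseq : ℕ → ℝ) (y : ℝ) (hbdd : ∃ M, ∀ m, |yseq m| ≤ M)
    (hy : Filter.Tendsto yseq Filter.atTop (nhds y))
    (p : ℝ) (hp : 1 < p)
    (Ω : Type*) [MeasureSpace Ω] [IsProbabilityMeasure (volume : Measure Ω)]
    (ε : ℕ → Ω → ℝ) (hmeas : ∀ j, Measurable (ε j))
    (hvals : ∀ j, ∀ ω, ε j ω = 1 ∨ ε j ω = -1) :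
    ∃ Z : Ω → ℝ,
      (∀ᵐ ω : Ω,
        Filter.Tendsto (fun N => ∑ j ∈ Finset.Icc 1 N, ρ ^ j * ε j ω)
          Filter.atTop (nhds (Z ω))) ∧
      Integrable (fun ω => |Z ω| ^ p) ∧
      Filter.Tendsto
        (fun n => ∫ ω, |(∑ j ∈ Finset.Icc 1 n, ρ ^ j * yseq (n - j) * ε j ω) - y * Z ω| ^ p)
        Filter.atTop (nhds 0) ∧
      Filter.Tendsto
        (fun n => ∫ ω, |∑ j ∈ Finset.Icc 1 n, ρ ^ j * yseq (n - j) * ε j ω| ^ p)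
        Filter.atTop (nhds (|y| ^ p * ∫ ω, |Z ω| ^ p)) := by
  obtain ⟨hρ0, hρ1⟩ := hρ
  obtain ⟨M, hM⟩ := hbdd
  have hp0 : 0 < p := by linarith
  have hε : ∀ j ω, |ε j ω| ≤ 1 := fun j ω ↦ by rcases hvals j ω with h | h <;> simp [h]
  have hw ω : Summable fun j ↦ ρ ^ j * ε j ω :=
    summable_pow_mul_of_abs_le_one (by rwa [abs_of_pos hρ0]) (hε · ω)
  set Z : Ω → ℝ := fun ω ↦ ∑' i, ρ ^ (i + 1) * ε (i + 1) ω
  set S : ℕ → Ω → ℝ := fun n ω ↦ ∑ j ∈ Icc 1 n, ρ ^ j * yseq (n - j) * ε j ω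
  have hZ ω : Tendsto (fun N ↦ ∑ j ∈ Icc 1 N, ρ ^ j * ε j ω) atTop (𝓝 (Z ω)) := by
    simpa using tendsto_sum_Icc_mul_of_tendsto (hw ω) (tendsto_const_nhds (x := (1 : ℝ)))
  have hS ω : Tendsto (S · ω) atTop (𝓝 (y * Z ω)) := by
    rw [mul_comm]
    convert tendsto_sum_Icc_mul_of_tendsto (hw ω) hy using 2 with n
    exact sum_congr rfl fun j _ ↦ mul_right_comm ..
  have hSmeas n : Measurable (S n) := measurable_sum _ fun j _ ↦ (hmeas j).const_mul _
  have hZmeas : Measurable Z :=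
    measurable_of_tendsto_metrizable (fun N ↦ measurable_sum _ fun j _ ↦ (hmeas j).const_mul _)
      (tendsto_pi_nhds.2 hZ)
  have hZC ω : |Z ω| ≤ (1 - ρ)⁻¹ :=
    le_of_tendsto' (hZ ω).abs fun N ↦ by
      simpa using abs_sum_Icc_pow_mul_mul_le hρ0.le hρ1 (hε · ω) (fun _ ↦ le_refl |(1 : ℝ)|) N
  have hSC n ω : |S n ω| ≤ M * (1 - ρ)⁻¹ := abs_sum_Icc_pow_mul_mul_le hρ0.le hρ1 (hε · ω) hM n
  refine ⟨Z, .of_forall hZ, ?_, ?_, ?_⟩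
  · exact .of_bound (hZmeas.abs.pow_const p).aestronglyMeasurable _
      (.of_forall fun ω ↦ norm_abs_rpow_le hp0.le (hZC ω))
  · exact tendsto_integral_abs_sub_rpow_of_tendsto hp0 (fun n ↦ (hSmeas n).aestronglyMeasurable)
      (fun n ↦ .of_forall (hSC n)) (.of_forall hS)
  · have := tendsto_integral_abs_rpow_of_tendsto (μ := volume) hp0.le
      (fun n ↦ (hSmeas n).aestronglyMeasurable) (fun n ↦ .of_forall (hSC n)) (.of_forall hS)
    simpa only [abs_mul, Real.mul_rpow (abs_nonneg y) (abs_nonneg _), integral_const_mul]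
      using this

/-- let `ρ ∈ (0,1)`, `(y_m)` bounded with `y_m → y`, and `(ε_j)_{j≥1}`
i.i.d. Rademacher.  Then `S_n := Σ_{j=1}^n ρ^j y_{n−j} ε_j` converges in `L^p` to
`y·Z` with `Z := Σ_{j=1}^∞ ρ^j ε_j` (convergent a.s. and in `L^p`); in particular
`E[|S_n|^p] → |y|^p E[|Z|^p]`. -/
theorem stmt14 (ρ : ℝ) (hρ : ρ ∈ Set.Ioo (0 : ℝ) 1)
    (yseq : ℕ → ℝ) (y : ℝ) (hbdd : ∃ M, ∀ m, |yseq m| ≤ M)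
    (hy : Filter.Tendsto yseq Filter.atTop (nhds y))
    (p : ℝ) (hp : 1 < p)
    (Ω : Type*) [MeasureSpace Ω] [IsProbabilityMeasure (volume : Measure Ω)]
    (ε : ℕ → Ω → ℝ) (hmeas : ∀ j, Measurable (ε j))
    (hvals : ∀ j, ∀ ω, ε j ω = 1 ∨ ε j ω = -1)
    (hfair : ∀ j, (volume : Measure Ω) {ω | ε j ω = 1} = 1 / 2)
    (hindep : ProbabilityTheory.iIndepFun ε volume) :
    ∃ Z : Ω → ℝ,
      (∀ᵐ ω : Ω,
        Filter.Tendsto (fun N => ∑ j ∈ Finset.Icc 1 N, ρ ^ j * ε j ω)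
          Filter.atTop (nhds (Z ω))) ∧
      Integrable (fun ω => |Z ω| ^ p) ∧
      Filter.Tendsto
        (fun n => ∫ ω, |(∑ j ∈ Finset.Icc 1 n, ρ ^ j * yseq (n - j) * ε j ω) - y * Z ω| ^ p)
        Filter.atTop (nhds 0) ∧
      Filter.Tendsto
        (fun n => ∫ ω, |∑ j ∈ Finset.Icc 1 n, ρ ^ j * yseq (n - j) * ε j ω| ^ p)
        Filter.atTop (nhds (|y| ^ p * ∫ ω, |Z ω| ^ p)) :=
  stmt14_general ρ hρ yseq y hbdd hy p hp Ω ε hmeas hvals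
end

section
/- Fix p > 1, α ∈ (0,1), and a continuous non-decreasing τ : [0,1] → [0,∞) with τ(0) = 0. Assume the class V^{p,τ}_𝕋 ∩ C^α([0,1]) of α-Hölder continuous functions whose dyadic p-th variation equals τ is nonempty, and assume that adding a function that is piecewise linear with breakpoints in a dyadic level 𝕋^n does not change the dyadic p-th variation. Then V^{p,τ}_𝕋 ∩ C^α([0,1]) is dense in C([0,1]) with the uniform norm. -/
/-- `w` is piecewise linear on `[0,1]` with breakpoints in the level-`n` dyadic grid. -/
def PiecewiseLinearDyadic (w : ℝ → ℝ) (n : ℕ) : Prop :=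
  ∀ i < 2 ^ n, ∀ t ∈ Set.Icc ((i : ℝ) / 2 ^ n) (((i : ℝ) + 1) / 2 ^ n),
    w t = w ((i : ℝ) / 2 ^ n) +
      (t - (i : ℝ) / 2 ^ n) * 2 ^ n *
        (w (((i : ℝ) + 1) / 2 ^ n) - w ((i : ℝ) / 2 ^ n))

/-!
Take `y₀` in the class and interpolate `f - y₀` piecewise linearly on a fine dyadic grid; the
interpolant `w` is uniformly close to `f - y₀` and Lipschitz, so `y₀ + w` is still α-Hölder and
close to `f`. Since `p > 1`, a Lipschitz path has dyadic `p`-variation `O(2^{n(1-p)}) → 0`, and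
Minkowski's inequality for the `p`-th roots then shows that adding `w` does not change the
limit `τ`.
-/

open Set Filter Topology
open scoped NNReal

lemma dyadicPVar_nonneg (p : ℝ) (x : ℝ → ℝ) (n : ℕ) (t : ℝ) : 0 ≤ dyadicPVar p x n t :=
  Finset.sum_nonneg fun _ _ => Real.rpow_nonneg (abs_nonneg _) _

lemma dyadicPVar_neg (p : ℝ) (x : ℝ → ℝ) (n : ℕ) (t : ℝ) :
    dyadicPVar p (fun u => -x u) n t = dyadicPVar p x n t := by
  simp only [dyadicPVar, neg_sub_neg, abs_sub_comm]

lemma dyadicPVar_add_rpow_inv_le {p : ℝ} (hp : 1 ≤ p) (x w : ℝ → ℝ) (n : ℕ) (t : ℝ) :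
    dyadicPVar p (fun u => x u + w u) n t ^ p⁻¹ ≤
      dyadicPVar p x n t ^ p⁻¹ + dyadicPVar p w n t ^ p⁻¹ := by
  simp only [dyadicPVar, ← one_div]
  convert Real.Lp_add_le _ _ _ hp using 5
  ring

lemma dyadicPVar_le_of_lipschitzWith {p : ℝ} (hp : 0 ≤ p) {K : ℝ≥0} {w : ℝ → ℝ}
    (hw : LipschitzWith K w) (n : ℕ) (t : ℝ) :
    dyadicPVar p w n t ≤ (K : ℝ) ^ p * ((2 : ℝ) ^ n) ^ (1 - p) := by
  have h2 : (0 : ℝ) < 2 ^ n := by positivity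
  have hwt : LipschitzWith (K * 1) fun u => w (min u t) := hw.comp (LipschitzWith.id.min_const t)
  have hstep : ∀ j ∈ Finset.range (2 ^ n),
      |w (min (((j : ℝ) + 1) / 2 ^ n) t) - w (min ((j : ℝ) / 2 ^ n) t)| ^ p ≤
        ((K : ℝ) / 2 ^ n) ^ p := by
    intro j _
    refine Real.rpow_le_rpow (abs_nonneg _) ?_ hp
    calc _ ≤ K * |((j : ℝ) + 1) / 2 ^ n - (j : ℝ) / 2 ^ n| := by
          simpa [Real.dist_eq] using hwt.dist_le_mul (((j : ℝ) + 1) / 2 ^ n) ((j : ℝ) / 2 ^ n)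
      _ = K / 2 ^ n := by
          rw [← sub_div, add_sub_cancel_left, abs_of_pos (by positivity : (0 : ℝ) < 1 / 2 ^ n)]
          ring
  calc dyadicPVar p w n t ≤ (Finset.range (2 ^ n)).card • ((K : ℝ) / 2 ^ n) ^ p :=
        Finset.sum_le_card_nsmul _ _ _ hstep
    _ = (K : ℝ) ^ p * ((2 : ℝ) ^ n) ^ (1 - p) := by
        rw [Finset.card_range, nsmul_eq_mul, Real.div_rpow K.coe_nonneg h2.le, Real.rpow_sub h2,
          Real.rpow_one]
        push_cast
        ring

lemma tendsto_dyadicPVar_of_lipschitzWith {p : ℝ} (hp : 1 < p) {K : ℝ≥0} {w : ℝ → ℝ}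
    (hw : LipschitzWith K w) (t : ℝ) :
    Tendsto (fun n => dyadicPVar p w n t) atTop (𝓝 0) := by
  have hgrid : Tendsto (fun n : ℕ => ((2 : ℝ) ^ n) ^ (1 - p)) atTop (𝓝 0) := by
    simpa only [Function.comp_def, neg_sub] using (tendsto_rpow_neg_atTop (sub_pos.2 hp)).comp
      (tendsto_pow_atTop_atTop_of_one_lt one_lt_two)
  have := hgrid.const_mul ((K : ℝ) ^ p)
  rw [mul_zero] at this
  exact squeeze_zero (fun n => dyadicPVar_nonneg p w n t)
    (fun n => dyadicPVar_le_of_lipschitzWith (by linarith) hw n t) this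

lemma tendsto_dyadicPVar_add_of_lipschitzWith {p : ℝ} (hp : 1 < p) {z : ℝ → ℝ} {t v : ℝ}
    (hz : Tendsto (fun n => dyadicPVar p z n t) atTop (𝓝 v)) {K : ℝ≥0} {w : ℝ → ℝ}
    (hw : LipschitzWith K w) :
    Tendsto (fun n => dyadicPVar p (fun u => z u + w u) n t) atTop (𝓝 v) := by
  have hp0 : p ≠ 0 := by positivity
  have hv : 0 ≤ v := ge_of_tendsto' hz (dyadicPVar_nonneg p z · t)
  have hroot : Tendsto (fun n => dyadicPVar p (fun u => z u + w u) n t ^ p⁻¹) atTop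
      (𝓝 (v ^ p⁻¹)) := by
    have hz' := hz.rpow_const (p := p⁻¹) (Or.inr (by positivity))
    have hw' : Tendsto (fun n => dyadicPVar p w n t ^ p⁻¹) atTop (𝓝 0) := by
      simpa [Real.zero_rpow (inv_ne_zero hp0)] using
        (tendsto_dyadicPVar_of_lipschitzWith hp hw t).rpow_const (p := p⁻¹) (Or.inr (by positivity))
    refine tendsto_of_tendsto_of_tendsto_of_le_of_le (by simpa using hz'.sub hw')
      (by simpa using hz'.add hw') (fun n => ?_)
      (fun n => dyadicPVar_add_rpow_inv_le hp.le z w n t)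
    have := dyadicPVar_add_rpow_inv_le hp.le (fun u => z u + w u) (fun u => -w u) n t
    simp only [add_neg_cancel_right, dyadicPVar_neg] at this
    linarith
  have := hroot.rpow_const (p := p) (Or.inr (by positivity))
  rw [Real.rpow_inv_rpow hv hp0] at this
  exact this.congr fun n => Real.rpow_inv_rpow (dyadicPVar_nonneg _ _ n t) hp0

lemma lipschitzWith_finset_sum {ι α E : Type*} [PseudoEMetricSpace α] [SeminormedAddCommGroup E]
    (s : Finset ι) {f : ι → α → E} {K : ι → ℝ≥0} (hf : ∀ i ∈ s, LipschitzWith (K i) (f i)) :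
    LipschitzWith (∑ i ∈ s, K i) fun x => ∑ i ∈ s, f i x := by
  induction s using Finset.cons_induction with
  | empty => simpa using LipschitzWith.const (0 : E)
  | cons i s _ ih =>
    simp only [Finset.sum_cons]
    exact (hf i (Finset.mem_cons_self i s)).add
      (ih fun j hj => hf j (Finset.mem_cons_of_mem hj))

/-- Each ramp `min t b_j - min t a_j` rises with slope one across the `j`-th dyadic cell
`[a_j, b_j]` and is constant elsewhere, so this is the piecewise linear interpolant of `g`. -/
noncomputable def dyadicInterp (g : ℝ → ℝ) (n : ℕ) (t : ℝ) : ℝ :=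
  g 0 + ∑ j ∈ Finset.range (2 ^ n),
    2 ^ n * (g (((j : ℝ) + 1) / 2 ^ n) - g ((j : ℝ) / 2 ^ n)) *
      (min t (((j : ℝ) + 1) / 2 ^ n) - min t ((j : ℝ) / 2 ^ n))

lemma exists_lipschitzWith_dyadicInterp (g : ℝ → ℝ) (n : ℕ) :
    ∃ K, LipschitzWith K (dyadicInterp g n) := by
  refine ⟨_, (LipschitzWith.const (g 0)).add (lipschitzWith_finset_sum _ fun j _ =>
    (lipschitzWith_smul (2 ^ n * (g (((j : ℝ) + 1) / 2 ^ n) - g ((j : ℝ) / 2 ^ n)))).comp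
      ((LipschitzWith.id.min_const _).sub (LipschitzWith.id.min_const _)))⟩

lemma dyadicInterp_eq_of_mem_Icc (g : ℝ → ℝ) {n i : ℕ} (hi : i < 2 ^ n) {t : ℝ}
    (ht : t ∈ Icc ((i : ℝ) / 2 ^ n) (((i : ℝ) + 1) / 2 ^ n)) :
    dyadicInterp g n t = g ((i : ℝ) / 2 ^ n) +
      (t - (i : ℝ) / 2 ^ n) * 2 ^ n * (g (((i : ℝ) + 1) / 2 ^ n) - g ((i : ℝ) / 2 ^ n)) := by
  have h2 : (0 : ℝ) < 2 ^ n := by positivity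
  have hbelow : ∀ j < i, min t (((j : ℝ) + 1) / 2 ^ n) - min t ((j : ℝ) / 2 ^ n) = 1 / 2 ^ n := by
    intro j hj
    have hj' : (j : ℝ) + 1 ≤ i := by exact_mod_cast hj
    rw [min_eq_right (le_trans (by gcongr) ht.1), min_eq_right (le_trans (by gcongr) ht.1)]
    ring
  have habove : ∀ j, i < j → min t (((j : ℝ) + 1) / 2 ^ n) - min t ((j : ℝ) / 2 ^ n) = 0 := by
    intro j hj
    have hj' : (i : ℝ) + 1 ≤ j := by exact_mod_cast hj
    rw [min_eq_left (ht.2.trans (by gcongr)), min_eq_left (ht.2.trans (by gcongr))]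
    ring
  have htele : ∑ j ∈ Finset.range i,
      2 ^ n * (g (((j : ℝ) + 1) / 2 ^ n) - g ((j : ℝ) / 2 ^ n)) *
        (min t (((j : ℝ) + 1) / 2 ^ n) - min t ((j : ℝ) / 2 ^ n)) = g ((i : ℝ) / 2 ^ n) - g 0 := by
    rw [show g 0 = g (((0 : ℕ) : ℝ) / 2 ^ n) by simp,
      ← Finset.sum_range_sub (fun k : ℕ => g ((k : ℝ) / 2 ^ n)) i]
    refine Finset.sum_congr rfl fun j hj => ?_
    rw [hbelow j (Finset.mem_range.1 hj)]
    push_cast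
    field_simp
  rw [dyadicInterp, ← Finset.sum_range_add_sum_Ico _ hi, Finset.sum_range_succ, htele,
    Finset.sum_eq_zero fun j hj => by rw [habove j (Finset.mem_Ico.1 hj).1, mul_zero],
    min_eq_left ht.2, min_eq_right ht.1]
  ring

lemma exists_lt_two_pow_mem_Icc (n : ℕ) {t : ℝ} (ht : t ∈ Icc (0 : ℝ) 1) :
    ∃ i : ℕ, i < 2 ^ n ∧ t ∈ Icc ((i : ℝ) / 2 ^ n) (((i : ℝ) + 1) / 2 ^ n) := by
  have h2 : (0 : ℝ) < 2 ^ n := by positivity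
  have ht2 : 0 ≤ t * 2 ^ n := mul_nonneg ht.1 h2.le
  rcases ht.2.lt_or_eq with ht1 | rfl
  · refine ⟨⌊t * 2 ^ n⌋₊, ?_, ?_, ?_⟩
    · exact_mod_cast (Nat.floor_lt ht2).2 (by simpa using mul_lt_of_lt_one_left h2 ht1)
    · rw [div_le_iff₀ h2]
      exact Nat.floor_le ht2
    · rw [le_div_iff₀ h2]
      exact (Nat.lt_floor_add_one _).le
  · refine ⟨2 ^ n - 1, Nat.sub_lt (Nat.two_pow_pos n) one_pos, ?_, ?_⟩ <;>
      rw [Nat.cast_sub Nat.one_le_two_pow] <;> push_cast <;> field_simp <;> linarith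

lemma abs_sub_dyadicInterp_le {g : ℝ → ℝ} {n : ℕ} {ε : ℝ}
    (hg : ∀ s ∈ Icc (0 : ℝ) 1, ∀ t ∈ Icc (0 : ℝ) 1, |s - t| ≤ 1 / 2 ^ n → |g s - g t| ≤ ε)
    {t : ℝ} (ht : t ∈ Icc (0 : ℝ) 1) :
    |g t - dyadicInterp g n t| ≤ ε := by
  obtain ⟨i, hi, hti⟩ := exists_lt_two_pow_mem_Icc n ht
  have h2 : (0 : ℝ) < 2 ^ n := by positivity
  set a : ℝ := (i : ℝ) / 2 ^ n
  set b : ℝ := ((i : ℝ) + 1) / 2 ^ n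
  have hba : b - a = 1 / 2 ^ n := by ring
  have hi' : (i : ℝ) + 1 ≤ 2 ^ n := by exact_mod_cast Nat.succ_le_of_lt hi
  have ha : a ∈ Icc (0 : ℝ) 1 := ⟨by positivity, (div_le_one h2).2 (by linarith)⟩
  have hb : b ∈ Icc (0 : ℝ) 1 := ⟨by positivity, (div_le_one h2).2 hi'⟩
  have hga : g a ∈ Metric.closedBall (g t) ε := by
    rw [Metric.mem_closedBall, Real.dist_eq, abs_sub_comm]
    exact hg t ht a ha (by rw [abs_of_nonneg (by linarith [hti.1])]; linarith [hti.2])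
  have hgb : g b ∈ Metric.closedBall (g t) ε := by
    rw [Metric.mem_closedBall, Real.dist_eq, abs_sub_comm]
    exact hg t ht b hb (by rw [abs_of_nonpos (by linarith [hti.2])]; linarith [hti.1])
  -- on its cell the interpolant is a convex combination of `g a` and `g b`
  have hθ : (t - a) * 2 ^ n ∈ Icc (0 : ℝ) 1 := by
    constructor
    · nlinarith [hti.1]
    · rw [← le_div_iff₀ h2]; linarith [hti.2]
  have := (convex_closedBall (g t) ε).add_smul_sub_mem hga hgb hθ
  rwa [Metric.mem_closedBall, Real.dist_eq, smul_eq_mul, abs_sub_comm,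
    ← dyadicInterp_eq_of_mem_Icc g hi hti] at this

lemma abs_add_sub_add_le_mul_rpow_of_lipschitzWith {y w : ℝ → ℝ} {C α : ℝ} {K : ℝ≥0}
    (hy : ∀ s ∈ Icc (0 : ℝ) 1, ∀ t ∈ Icc (0 : ℝ) 1, |y t - y s| ≤ C * |t - s| ^ α)
    (hw : LipschitzWith K w) (hα : α ≤ 1) {s t : ℝ} (hs : s ∈ Icc (0 : ℝ) 1)
    (ht : t ∈ Icc (0 : ℝ) 1) :
    |(y t + w t) - (y s + w s)| ≤ (C + K) * |t - s| ^ α := by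
  have hts : |t - s| ≤ 1 := abs_sub_le_iff.2 ⟨by linarith [ht.2, hs.1], by linarith [hs.2, ht.1]⟩
  calc |(y t + w t) - (y s + w s)| = |(y t - y s) + (w t - w s)| := by ring_nf
    _ ≤ |y t - y s| + |w t - w s| := abs_add_le _ _
    _ ≤ C * |t - s| ^ α + K * |t - s| := by
        gcongr
        · exact hy s hs t ht
        · simpa [Real.dist_eq] using hw.dist_le_mul t s
    _ ≤ (C + K) * |t - s| ^ α := by
        rw [add_mul]
        gcongr
        exact Real.self_le_rpow_of_le_one (abs_nonneg _) hts hα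

theorem stmt18_general (p α : ℝ) (hp : 1 < p) (hα : α ∈ Set.Ioo (0 : ℝ) 1)
    (τ : ℝ → ℝ)
    (hne : ∃ y : ℝ → ℝ, ContinuousOn y (Set.Icc 0 1) ∧
      (∃ C : ℝ, ∀ s ∈ Set.Icc (0 : ℝ) 1, ∀ t ∈ Set.Icc (0 : ℝ) 1,
        |y t - y s| ≤ C * |t - s| ^ α) ∧
      ∀ t ∈ Set.Icc (0 : ℝ) 1,
        Filter.Tendsto (fun n => dyadicPVar p y n t) Filter.atTop (nhds (τ t))) :
    ∀ f : ℝ → ℝ, ContinuousOn f (Set.Icc 0 1) → ∀ ε : ℝ, 0 < ε →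
      ∃ y : ℝ → ℝ, ContinuousOn y (Set.Icc 0 1) ∧
        (∃ C : ℝ, ∀ s ∈ Set.Icc (0 : ℝ) 1, ∀ t ∈ Set.Icc (0 : ℝ) 1,
          |y t - y s| ≤ C * |t - s| ^ α) ∧
        (∀ t ∈ Set.Icc (0 : ℝ) 1,
          Filter.Tendsto (fun n => dyadicPVar p y n t) Filter.atTop (nhds (τ t))) ∧
        ∀ t ∈ Set.Icc (0 : ℝ) 1, |f t - y t| < ε := by
  intro f hf ε hε
  obtain ⟨y₀, hy₀, ⟨C, hC⟩, hy₀τ⟩ := hne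
  set g : ℝ → ℝ := fun u => f u - y₀ u
  obtain ⟨δ, hδ, hgδ⟩ := Metric.uniformContinuousOn_iff.1
    (isCompact_Icc.uniformContinuousOn_of_continuous (hf.sub hy₀)) (ε / 2) (half_pos hε)
  obtain ⟨n, hn⟩ := exists_pow_lt_of_lt_one hδ one_half_lt_one
  obtain ⟨K, hK⟩ := exists_lipschitzWith_dyadicInterp g n
  have hclose : ∀ t ∈ Icc (0 : ℝ) 1, |g t - dyadicInterp g n t| ≤ ε / 2 :=
    fun t ht => abs_sub_dyadicInterp_le (fun s hs t ht hst =>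
      (hgδ s hs t ht (by rw [Real.dist_eq]; exact hst.trans_lt (by simpa using hn))).le) ht
  refine ⟨fun u => y₀ u + dyadicInterp g n u, hy₀.add hK.continuous.continuousOn,
    ⟨C + K, fun s hs t ht => abs_add_sub_add_le_mul_rpow_of_lipschitzWith hC hK hα.2.le hs ht⟩,
    fun t ht => tendsto_dyadicPVar_add_of_lipschitzWith hp (hy₀τ t ht) hK, fun t ht => ?_⟩
  calc |f t - (y₀ t + dyadicInterp g n t)| = |g t - dyadicInterp g n t| := by rw [← sub_sub]
    _ < ε := (hclose t ht).trans_lt (half_lt_self hε)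

/-- if the class `V^{p,τ}_𝕋 ∩ C^α([0,1])` of α-Hölder paths with dyadic
p-th variation `τ` is nonempty (and adding a dyadic piecewise linear function does not
change the dyadic p-th variation), then this class is dense in `C([0,1])` for the
uniform norm. -/
theorem stmt18 (p α : ℝ) (hp : 1 < p) (hα : α ∈ Set.Ioo (0 : ℝ) 1)
    (τ : ℝ → ℝ) (hτcont : ContinuousOn τ (Set.Icc 0 1))
    (hτmono : MonotoneOn τ (Set.Icc 0 1)) (hτ0 : τ 0 = 0)
    (hne : ∃ y : ℝ → ℝ, ContinuousOn y (Set.Icc 0 1) ∧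
      (∃ C : ℝ, ∀ s ∈ Set.Icc (0 : ℝ) 1, ∀ t ∈ Set.Icc (0 : ℝ) 1,
        |y t - y s| ≤ C * |t - s| ^ α) ∧
      ∀ t ∈ Set.Icc (0 : ℝ) 1,
        Filter.Tendsto (fun n => dyadicPVar p y n t) Filter.atTop (nhds (τ t)))
    (hpl : ∀ (z w : ℝ → ℝ) (n : ℕ) (V : ℝ → ℝ), PiecewiseLinearDyadic w n →
      (∀ t ∈ Set.Icc (0 : ℝ) 1,
        Filter.Tendsto (fun m => dyadicPVar p z m t) Filter.atTop (nhds (V t))) →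
      ∀ t ∈ Set.Icc (0 : ℝ) 1,
        Filter.Tendsto (fun m => dyadicPVar p (fun u => z u + w u) m t)
          Filter.atTop (nhds (V t))) :
    ∀ f : ℝ → ℝ, ContinuousOn f (Set.Icc 0 1) → ∀ ε : ℝ, 0 < ε →
      ∃ y : ℝ → ℝ, ContinuousOn y (Set.Icc 0 1) ∧
        (∃ C : ℝ, ∀ s ∈ Set.Icc (0 : ℝ) 1, ∀ t ∈ Set.Icc (0 : ℝ) 1,
          |y t - y s| ≤ C * |t - s| ^ α) ∧
        (∀ t ∈ Set.Icc (0 : ℝ) 1,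
          Filter.Tendsto (fun n => dyadicPVar p y n t) Filter.atTop (nhds (τ t))) ∧
        ∀ t ∈ Set.Icc (0 : ℝ) 1, |f t - y t| < ε :=
  stmt18_general p α hp hα τ hne
end

section
/- Fix an even integer p ∈ 2ℕ and constants C_p > 0. Let x̄ ∈ C([0,1]) be strictly positive with [x̄]^{(p)}_𝕋(t) = C_p t, let B be a Banach space continuously embedded in both C([0,1]) and L^p([0,1]) with B ⊂ V^p_𝕋 and [g]^{(p)}_𝕋 ≡ 0 for all g ∈ B, and let f ∈ C^p(ℝ). Assume the pathwise change-of-variable formula: for y = g x̄, the Föllmer–Itô integral satisfies ∫_0^t f'(y_u) dy_u = f(y(t)) − f(y(0)) − (C_p/p!) ∫_0^t f^{(p)}(y(u)) |g(u)|^p du. Then the map y ↦ (t ↦ ∫_0^t f'(y_u) dy_u), from {g x̄ : g ∈ B} with norm ‖g x̄‖ := ‖g‖_B to C([0,1]) with sup norm, is continuous, provided f^{(p)} is bounded on ℝ. -/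
lemma unif_aux (h : ℝ → ℝ) (hh : Continuous h) (R : ℝ) {ε : ℝ} (hε : 0 < ε) :
    ∃ η > (0:ℝ), ∀ a b : ℝ, |a| ≤ R → |b| ≤ R → |a - b| ≤ η → |h a - h b| ≤ ε := by
  have hc : UniformContinuousOn h (Set.Icc (-R) R) :=
    (isCompact_Icc).uniformContinuousOn_of_continuous hh.continuousOn
  rw [Metric.uniformContinuousOn_iff_le] at hc
  obtain ⟨η, hη, H⟩ := hc ε hε
  refine ⟨η, hη, fun a b ha hb hab => ?_⟩
  have := H a (by rw [Set.mem_Icc]; exact abs_le.mp ha) b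
    (by rw [Set.mem_Icc]; exact abs_le.mp hb) (by rwa [Real.dist_eq])
  rwa [Real.dist_eq] at this

lemma pow_diff_aux (p : ℕ) (A a b : ℝ) (ha : 0 ≤ a) (hb : 0 ≤ b) (haA : a ≤ A)
    (hbA : b ≤ A) : |a ^ p - b ^ p| ≤ p * A ^ (p - 1) * |a - b| := by
  have hA : 0 ≤ A := le_trans ha haA
  rw [← geom_sum₂_mul a b p, abs_mul]
  gcongr
  calc |∑ i ∈ Finset.range p, a ^ i * b ^ (p - 1 - i)|
      ≤ ∑ i ∈ Finset.range p, |a ^ i * b ^ (p - 1 - i)| := Finset.abs_sum_le_sum_abs _ _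
    _ ≤ ∑ _i ∈ Finset.range p, A ^ (p - 1) := by
        refine Finset.sum_le_sum fun i hi => ?_
        rw [abs_mul, abs_pow, abs_pow, abs_of_nonneg ha, abs_of_nonneg hb]
        have hip : i ≤ p - 1 := Nat.le_sub_one_of_lt (Finset.mem_range.mp hi)
        calc a ^ i * b ^ (p - 1 - i) ≤ A ^ i * A ^ (p - 1 - i) := by
              exact mul_le_mul (pow_le_pow_left₀ ha haA i) (pow_le_pow_left₀ hb hbA _)
                (pow_nonneg hb _) (pow_nonneg hA _)
          _ = A ^ (p - 1) := by rw [← pow_add, Nat.add_sub_cancel' hip]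
    _ = p * A ^ (p - 1) := by rw [Finset.sum_const, Finset.card_range, nsmul_eq_mul]

theorem stmt19' (p : ℕ) (hpeven : Even p) (hp2 : 2 ≤ p) (Cp : ℝ) (hCp : 0 < Cp)
    (xb : ℝ → ℝ) (hxbcont : ContinuousOn xb (Set.Icc 0 1))
    (hxbpos : ∀ t ∈ Set.Icc (0 : ℝ) 1, 0 < xb t)
    (B : Type*) [NormedAddCommGroup B] [NormedSpace ℝ B] [CompleteSpace B]
    (ι : B →ₗ[ℝ] (ℝ → ℝ)) (hι : Function.Injective ι)
    (hcont : ∀ g : B, ContinuousOn (ι g) (Set.Icc 0 1))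
    (K₁ : ℝ) (hK₁ : ∀ g : B, ∀ t ∈ Set.Icc (0 : ℝ) 1, |ι g t| ≤ K₁ * ‖g‖)
    (f : ℝ → ℝ) (hf : ContDiff ℝ p f)
    (Mf : ℝ) (hMf : ∀ u : ℝ, |iteratedDeriv p f u| ≤ Mf)
    (J : B → ℝ → ℝ)
    (hJ : ∀ g : B, ∀ t ∈ Set.Icc (0 : ℝ) 1,
      J g t = f (ι g t * xb t) - f (ι g 0 * xb 0) -
        (Cp / (Nat.factorial p : ℝ)) *
          ∫ u in (0 : ℝ)..t, iteratedDeriv p f (ι g u * xb u) * |ι g u| ^ p) :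
    ∀ g : B, ∀ ε : ℝ, 0 < ε → ∃ δ : ℝ, 0 < δ ∧
      ∀ g' : B, ‖g' - g‖ < δ → ∀ t ∈ Set.Icc (0 : ℝ) 1, |J g' t - J g t| ≤ ε := by
  intro g ε hε
  set c : ℝ := Cp / (Nat.factorial p : ℝ) with hcdef
  have hc0 : 0 ≤ c := div_nonneg hCp.le (Nat.cast_nonneg _)
  obtain ⟨Mx0, hMx0⟩ := isCompact_Icc.exists_bound_of_continuousOn hxbcont
  set Mx : ℝ := max Mx0 1 with hMxdef
  have hMx1 : (1:ℝ) ≤ Mx := le_max_right _ _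
  have hMx : ∀ s ∈ Set.Icc (0:ℝ) 1, |xb s| ≤ Mx := fun s hs =>
    le_trans (hMx0 s hs) (le_max_left _ _)
  set K : ℝ := max K₁ 1 with hKdef
  have hK1 : (1:ℝ) ≤ K := le_max_right _ _
  have hK0 : (0:ℝ) < K := lt_of_lt_of_le one_pos hK1
  have hKb : ∀ h : B, ∀ s ∈ Set.Icc (0:ℝ) 1, |ι h s| ≤ K * ‖h‖ := fun h s hs =>
    le_trans (hK₁ h s hs) (mul_le_mul_of_nonneg_right (le_max_left _ _) (norm_nonneg _))
  set A : ℝ := K * (‖g‖ + 1) with hAdef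
  have hA0 : (0:ℝ) < A := mul_pos hK0 (by positivity)
  set R : ℝ := A * Mx with hRdef
  have hMf0 : (0:ℝ) ≤ Mf := le_trans (abs_nonneg _) (hMf 0)
  set F := iteratedDeriv p f with hFdef
  have hFc : Continuous F := hf.continuous_iteratedDeriv p le_rfl
  obtain ⟨η₁, hη₁, H₁⟩ := unif_aux f hf.continuous R (show (0:ℝ) < ε/4 by linarith)
  set ε₂ : ℝ := (ε/4) / (c * A ^ p + 1) with hε₂def
  have hε₂ : 0 < ε₂ := div_pos (by linarith) (by positivity)
  obtain ⟨η₂, hη₂, H₂⟩ := unif_aux F hFc R hε₂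
  set D : ℝ := c * Mf * p * A ^ (p-1) * K + 1 with hDdef
  have hD0 : (0:ℝ) < D := by positivity
  have hKMx : (0:ℝ) < K * Mx := by positivity
  set δ : ℝ := min 1 (min ((ε/4)/D) (min η₁ η₂ / (K * Mx))) with hδdef
  have hδ0 : 0 < δ := lt_min one_pos (lt_min (div_pos (by linarith) hD0)
    (div_pos (lt_min hη₁ hη₂) hKMx))
  refine ⟨δ, hδ0, ?_⟩
  intro g' hg' t ht
  have hδ1 : δ ≤ 1 := min_le_left _ _
  have hδD : δ ≤ (ε/4)/D := le_trans (min_le_right _ _) (min_le_left _ _)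
  have hδη : δ * (K * Mx) ≤ min η₁ η₂ := by
    have : δ ≤ min η₁ η₂ / (K * Mx) :=
      le_trans (min_le_right _ _) (min_le_right _ _)
    exact (le_div_iff₀ hKMx).mp this
  have hgg' : ‖g' - g‖ ≤ δ := hg'.le
  have hg'norm : ‖g'‖ ≤ ‖g‖ + 1 := by
    have := norm_sub_norm_le g' g
    linarith
  -- pointwise bounds on [0,1]
  have hbg : ∀ s ∈ Set.Icc (0:ℝ) 1, |ι g s| ≤ A := fun s hs =>
    (hKb g s hs).trans (mul_le_mul_of_nonneg_left (by linarith) hK0.le)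
  have hbg' : ∀ s ∈ Set.Icc (0:ℝ) 1, |ι g' s| ≤ A := fun s hs =>
    (hKb g' s hs).trans (mul_le_mul_of_nonneg_left hg'norm hK0.le)
  have hdiff : ∀ s ∈ Set.Icc (0:ℝ) 1, |ι g' s - ι g s| ≤ K * δ := fun s hs => by
    have h := hKb (g' - g) s hs
    rw [map_sub, Pi.sub_apply] at h
    exact h.trans (mul_le_mul_of_nonneg_left hgg' hK0.le)
  have hprod : ∀ s ∈ Set.Icc (0:ℝ) 1, |ι g s * xb s| ≤ R := fun s hs => by
    rw [abs_mul]
    exact mul_le_mul (hbg s hs) (hMx s hs) (abs_nonneg _) hA0.le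
  have hprod' : ∀ s ∈ Set.Icc (0:ℝ) 1, |ι g' s * xb s| ≤ R := fun s hs => by
    rw [abs_mul]
    exact mul_le_mul (hbg' s hs) (hMx s hs) (abs_nonneg _) hA0.le
  have hyd : ∀ s ∈ Set.Icc (0:ℝ) 1, |ι g' s * xb s - ι g s * xb s| ≤ min η₁ η₂ :=
    fun s hs => by
      have : ι g' s * xb s - ι g s * xb s = (ι g' s - ι g s) * xb s := by ring
      rw [this, abs_mul]
      calc |ι g' s - ι g s| * |xb s| ≤ (K * δ) * Mx :=
            mul_le_mul (hdiff s hs) (hMx s hs) (abs_nonneg _) (by positivity)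
        _ = δ * (K * Mx) := by ring
        _ ≤ min η₁ η₂ := hδη
  have hfterm : ∀ s ∈ Set.Icc (0:ℝ) 1,
      |f (ι g' s * xb s) - f (ι g s * xb s)| ≤ ε/4 := fun s hs =>
    H₁ _ _ (hprod' s hs) (hprod s hs) ((hyd s hs).trans (min_le_left _ _))
  -- integral term
  have hsub1 : Set.uIcc (0:ℝ) t ⊆ Set.Icc 0 1 := by
    rw [Set.uIcc_of_le ht.1]
    exact Set.Icc_subset_Icc le_rfl ht.2
  have hsub2 : Set.uIoc (0:ℝ) t ⊆ Set.Icc 0 1 := by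
    rw [Set.uIoc_of_le ht.1]
    exact fun u hu => ⟨hu.1.le, hu.2.trans ht.2⟩
  have hΦc : ∀ h : B, ContinuousOn (fun u => F (ι h u * xb u) * |ι h u| ^ p)
      (Set.Icc 0 1) := fun h =>
    (hFc.comp_continuousOn ((hcont h).mul hxbcont)).mul (((hcont h).abs).pow p)
  have hint : IntervalIntegrable (fun u => F (ι g u * xb u) * |ι g u| ^ p)
      MeasureTheory.volume 0 t := ((hΦc g).mono hsub1).intervalIntegrable
  have hint' : IntervalIntegrable (fun u => F (ι g' u * xb u) * |ι g' u| ^ p)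
      MeasureTheory.volume 0 t := ((hΦc g').mono hsub1).intervalIntegrable
  set C0 : ℝ := Mf * ((p : ℝ) * A ^ (p - 1) * (K * δ)) + A ^ p * ε₂ with hC0def
  have hptw : ∀ u ∈ Set.uIoc (0:ℝ) t,
      ‖F (ι g' u * xb u) * |ι g' u| ^ p - F (ι g u * xb u) * |ι g u| ^ p‖ ≤ C0 := by
    intro u hu
    have hu1 : u ∈ Set.Icc (0:ℝ) 1 := hsub2 hu
    rw [Real.norm_eq_abs]
    have hdec : F (ι g' u * xb u) * |ι g' u| ^ p - F (ι g u * xb u) * |ι g u| ^ p =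
        F (ι g' u * xb u) * (|ι g' u| ^ p - |ι g u| ^ p) +
          (F (ι g' u * xb u) - F (ι g u * xb u)) * |ι g u| ^ p := by ring
    rw [hdec]
    refine (abs_add_le _ _).trans ?_
    rw [abs_mul, abs_mul]
    have h1 : |F (ι g' u * xb u)| * |(|ι g' u| ^ p - |ι g u| ^ p)| ≤
        Mf * ((p : ℝ) * A ^ (p - 1) * (K * δ)) := by
      refine mul_le_mul (hMf _) ?_ (abs_nonneg _) hMf0
      refine (pow_diff_aux p A _ _ (abs_nonneg _) (abs_nonneg _) (hbg' u hu1)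
        (hbg u hu1)).trans ?_
      exact mul_le_mul_of_nonneg_left
        ((abs_abs_sub_abs_le_abs_sub _ _).trans (hdiff u hu1)) (by positivity)
    have h2 : |F (ι g' u * xb u) - F (ι g u * xb u)| * |(|ι g u| ^ p)| ≤ A ^ p * ε₂ := by
      calc |F (ι g' u * xb u) - F (ι g u * xb u)| * |(|ι g u| ^ p)|
          = |(|ι g u| ^ p)| * |F (ι g' u * xb u) - F (ι g u * xb u)| := mul_comm _ _
        _ ≤ A ^ p * ε₂ := by
            refine mul_le_mul ?_ (H₂ _ _ (hprod' u hu1) (hprod u hu1)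
              ((hyd u hu1).trans (min_le_right _ _))) (abs_nonneg _) (by positivity)
            rw [abs_of_nonneg (by positivity : (0:ℝ) ≤ |ι g u| ^ p)]
            exact pow_le_pow_left₀ (abs_nonneg _) (hbg u hu1) p
    linarith
  have hintbound : |(∫ u in (0:ℝ)..t, F (ι g' u * xb u) * |ι g' u| ^ p) -
      ∫ u in (0:ℝ)..t, F (ι g u * xb u) * |ι g u| ^ p| ≤ C0 := by
    rw [← intervalIntegral.integral_sub hint' hint]
    have := intervalIntegral.norm_integral_le_of_norm_le_const hptw
    rw [Real.norm_eq_abs] at this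
    have ht1 : |t - 0| ≤ 1 := by
      rw [sub_zero, abs_of_nonneg ht.1]; exact ht.2
    have hC00 : (0:ℝ) ≤ C0 := by positivity
    nlinarith [abs_nonneg ((∫ u in (0:ℝ)..t, F (ι g' u * xb u) * |ι g' u| ^ p) -
      ∫ u in (0:ℝ)..t, F (ι g u * xb u) * |ι g u| ^ p)]
  -- assemble
  rw [hJ g' t ht, hJ g t ht]
  have h0mem : (0:ℝ) ∈ Set.Icc (0:ℝ) 1 := Set.mem_Icc.mpr ⟨le_rfl, zero_le_one⟩
  have hrw : f (ι g' t * xb t) - f (ι g' 0 * xb 0) -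
        c * (∫ u in (0:ℝ)..t, F (ι g' u * xb u) * |ι g' u| ^ p) -
      (f (ι g t * xb t) - f (ι g 0 * xb 0) -
        c * ∫ u in (0:ℝ)..t, F (ι g u * xb u) * |ι g u| ^ p) =
      (f (ι g' t * xb t) - f (ι g t * xb t)) - (f (ι g' 0 * xb 0) - f (ι g 0 * xb 0))
        - c * ((∫ u in (0:ℝ)..t, F (ι g' u * xb u) * |ι g' u| ^ p) -
          ∫ u in (0:ℝ)..t, F (ι g u * xb u) * |ι g u| ^ p) := by ring
  rw [hrw]
  have hb1 := hfterm t ht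
  have hb2 := hfterm 0 h0mem
  have hb3 : c * |(∫ u in (0:ℝ)..t, F (ι g' u * xb u) * |ι g' u| ^ p) -
      ∫ u in (0:ℝ)..t, F (ι g u * xb u) * |ι g u| ^ p| ≤ c * C0 :=
    mul_le_mul_of_nonneg_left hintbound hc0
  have hC0small : c * C0 ≤ ε/2 := by
    have e1 : c * (Mf * ((p:ℝ) * A ^ (p-1) * (K * δ))) ≤ D * δ := by
      have : c * (Mf * ((p:ℝ) * A ^ (p-1) * (K * δ))) =
          (c * Mf * (p:ℝ) * A ^ (p-1) * K) * δ := by ring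
      rw [this]
      exact mul_le_mul_of_nonneg_right (by rw [hDdef]; linarith) hδ0.le
    have e2 : D * δ ≤ ε/4 := by
      calc D * δ ≤ D * ((ε/4)/D) := mul_le_mul_of_nonneg_left hδD hD0.le
        _ = ε/4 := mul_div_cancel₀ _ hD0.ne'
    have e3 : c * (A ^ p * ε₂) ≤ ε/4 := by
      have : c * (A ^ p * ε₂) = (c * A ^ p) * ε₂ := by ring
      rw [this, hε₂def]
      calc (c * A ^ p) * ((ε/4) / (c * A ^ p + 1)) ≤
          (c * A ^ p + 1) * ((ε/4) / (c * A ^ p + 1)) := by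
            refine mul_le_mul_of_nonneg_right (by linarith) ?_
            positivity
        _ = ε/4 := mul_div_cancel₀ _ (by positivity)
    have : c * C0 = c * (Mf * ((p:ℝ) * A ^ (p-1) * (K * δ))) + c * (A ^ p * ε₂) := by
      rw [hC0def]; ring
    linarith
  calc |f (ι g' t * xb t) - f (ι g t * xb t) -
        (f (ι g' 0 * xb 0) - f (ι g 0 * xb 0)) -
        c * ((∫ u in (0:ℝ)..t, F (ι g' u * xb u) * |ι g' u| ^ p) -
          ∫ u in (0:ℝ)..t, F (ι g u * xb u) * |ι g u| ^ p)|
      ≤ |f (ι g' t * xb t) - f (ι g t * xb t)| +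
        |f (ι g' 0 * xb 0) - f (ι g 0 * xb 0)| +
        c * |(∫ u in (0:ℝ)..t, F (ι g' u * xb u) * |ι g' u| ^ p) -
          ∫ u in (0:ℝ)..t, F (ι g u * xb u) * |ι g u| ^ p| := by
        have := abs_sub (f (ι g' t * xb t) - f (ι g t * xb t) -
          (f (ι g' 0 * xb 0) - f (ι g 0 * xb 0)))
          (c * ((∫ u in (0:ℝ)..t, F (ι g' u * xb u) * |ι g' u| ^ p) -
            ∫ u in (0:ℝ)..t, F (ι g u * xb u) * |ι g u| ^ p))
        have h2 := abs_sub (f (ι g' t * xb t) - f (ι g t * xb t))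
          (f (ι g' 0 * xb 0) - f (ι g 0 * xb 0))
        rw [abs_mul, abs_of_nonneg hc0] at this
        linarith
    _ ≤ ε/4 + ε/4 + ε/2 := add_le_add (add_le_add hb1 hb2) (hb3.trans hC0small)
    _ = ε := by ring

/-- continuity of the Föllmer–Itô map on the transported subspace
`L_{x̄}(B) = {g·x̄ : g ∈ B}` (with norm `‖g·x̄‖ := ‖g‖_B`) for an even integer `p`,
assuming the pathwise change-of-variable formula and that `f^{(p)}` is bounded. -/
theorem stmt19 (p : ℕ) (hpeven : Even p) (hp2 : 2 ≤ p) (Cp : ℝ) (hCp : 0 < Cp)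
    (xb : ℝ → ℝ) (hxbcont : ContinuousOn xb (Set.Icc 0 1))
    (hxbpos : ∀ t ∈ Set.Icc (0 : ℝ) 1, 0 < xb t)
    (hxbvar : ∀ t ∈ Set.Icc (0 : ℝ) 1,
      Filter.Tendsto (fun n => dyadicPVar (p : ℝ) xb n t) Filter.atTop (nhds (Cp * t)))
    (B : Type*) [NormedAddCommGroup B] [NormedSpace ℝ B] [CompleteSpace B]
    (ι : B →ₗ[ℝ] (ℝ → ℝ)) (hι : Function.Injective ι)
    (hcont : ∀ g : B, ContinuousOn (ι g) (Set.Icc 0 1))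
    (K₁ : ℝ) (hK₁ : ∀ g : B, ∀ t ∈ Set.Icc (0 : ℝ) 1, |ι g t| ≤ K₁ * ‖g‖)
    (K₂ : ℝ) (hK₂ : ∀ g : B,
      (∫ u in (0 : ℝ)..1, |ι g u| ^ (p : ℝ)) ^ (1 / (p : ℝ)) ≤ K₂ * ‖g‖)
    (hzero : ∀ g : B, ∀ t ∈ Set.Icc (0 : ℝ) 1,
      Filter.Tendsto (fun n => dyadicPVar (p : ℝ) (ι g) n t) Filter.atTop (nhds 0))
    (f : ℝ → ℝ) (hf : ContDiff ℝ p f)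
    (Mf : ℝ) (hMf : ∀ u : ℝ, |iteratedDeriv p f u| ≤ Mf)
    (J : B → ℝ → ℝ)
    (hJ : ∀ g : B, ∀ t ∈ Set.Icc (0 : ℝ) 1,
      J g t = f (ι g t * xb t) - f (ι g 0 * xb 0) -
        (Cp / (Nat.factorial p : ℝ)) *
          ∫ u in (0 : ℝ)..t, iteratedDeriv p f (ι g u * xb u) * |ι g u| ^ p) :
    ∀ g : B, ∀ ε : ℝ, 0 < ε → ∃ δ : ℝ, 0 < δ ∧
      ∀ g' : B, ‖g' - g‖ < δ → ∀ t ∈ Set.Icc (0 : ℝ) 1, |J g' t - J g t| ≤ ε := by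
  exact stmt19' p hpeven hp2 Cp hCp xb hxbcont hxbpos B ι hι hcont K₁ hK₁ f hf Mf hMf J hJ
end
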